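/- arXiv:1903.09194 — 5 statements merged into one kernel-verified Lean document; each statement's English description precedes it below -/
import Mathlib

section
/- Let A be a d×d invertible integer matrix such that no eigenvalue of A is an integral algebraic unit. Then the set of points x ∈ 𝕋^d with (T_A)^n x = 0 for some n ≥ 0 is dense in 𝕋^d. -/
open Matrix Polynomial Filter Topology

lemma charpoly_eval' {n : Type*} [Fintype n] [DecidableEq n] {R : Type*} [CommRing R]
    (M : Matrix n n R) (r : R) :
    M.charpoly.eval r = (r • (1 : Matrix n n R) - M).det := by
  rw [Matrix.charpoly, eval_det, Matrix.matPolyEquiv_charmatrix]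
  congr 1
  simp only [eval_sub, eval_X, eval_C]
  congr 1
  ext i j
  simp [Matrix.scalar, Matrix.smul_apply, Matrix.one_apply, Matrix.diagonal]

-- root of charpoly gives eigenvector
lemma eigvec_of_root {n : Type*} [Fintype n] [DecidableEq n] {K : Type*} [Field K]
    {M : Matrix n n K} {lam : K} (h : M.charpoly.IsRoot lam) :
    ∃ v : n → K, v ≠ 0 ∧ M *ᵥ v = lam • v := by
  have hdet : (lam • (1 : Matrix n n K) - M).det = 0 := by
    rw [← charpoly_eval']; exact h
  obtain ⟨v, hv, hveq⟩ := (Matrix.exists_mulVec_eq_zero_iff).mpr hdet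
  refine ⟨v, hv, ?_⟩
  have : (lam • (1 : Matrix n n K)) *ᵥ v - M *ᵥ v = 0 := by
    rw [← Matrix.sub_mulVec]; exact hveq
  have h2 : (lam • (1 : Matrix n n K)) *ᵥ v = lam • v := by
    rw [Matrix.smul_mulVec, Matrix.one_mulVec]
  rw [h2] at this
  exact (sub_eq_zero.mp this).symm


lemma root_of_eigvec {n : Type*} [Fintype n] [DecidableEq n] {K : Type*} [Field K]
    {M : Matrix n n K} {lam : K} {v : n → K} (hv : v ≠ 0) (h : M *ᵥ v = lam • v) :
    M.charpoly.IsRoot lam := by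
  have : (lam • (1 : Matrix n n K) - M) *ᵥ v = 0 := by
    rw [Matrix.sub_mulVec, Matrix.smul_mulVec, Matrix.one_mulVec, h, sub_self]
  have hdet : (lam • (1 : Matrix n n K) - M).det = 0 :=
    (Matrix.exists_mulVec_eq_zero_iff).mp ⟨v, hv, this⟩
  rw [Polynomial.IsRoot, charpoly_eval', hdet]

lemma isIntegral_of_charpoly_root {n : Type*} [Fintype n] [DecidableEq n]
    {M : Matrix n n ℤ} {lam : ℂ} (h : (M.map (Int.cast : ℤ → ℂ)).charpoly.IsRoot lam) :
    IsIntegral ℤ lam := by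
  refine ⟨M.charpoly, M.charpoly_monic, ?_⟩
  rw [← Polynomial.eval_map]
  have : M.charpoly.map (Int.castRingHom ℂ) = (M.map (Int.cast : ℤ → ℂ)).charpoly :=
    (Matrix.charpoly_map M (Int.castRingHom ℂ)).symm
  rw [show algebraMap ℤ ℂ = Int.castRingHom ℂ from rfl, this]
  exact h

lemma small_mem_linpart {E : Type*} [NormedAddCommGroup E] [NormedSpace ℝ E]
    [FiniteDimensional ℝ E] (G : AddSubgroup E) (hGc : IsClosed (G : Set E))
    (V W : Submodule ℝ E) (hV : ∀ x, x ∈ V ↔ ∀ t : ℝ, t • x ∈ G)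
    (hW : IsCompl V W) :
    ∃ r > 0, ∀ g ∈ G, ‖g‖ < r → g ∈ V := by
  by_contra hcon
  push_neg at hcon
  have hex : ∀ k : ℕ, ∃ g ∈ G, ‖g‖ < 1 / (k + 1) ∧ g ∉ V := by
    intro k
    obtain ⟨g, hg1, hg2, hg3⟩ := hcon (1 / (k + 1)) (by positivity)
    exact ⟨g, hg1, hg2, hg3⟩
  choose g hgG hgn hgV using hex
  set P : E →ₗ[ℝ] E := W.subtype ∘ₗ Submodule.projectionOnto W V hW.symm with hP
  have hPmem : ∀ x : E, P x ∈ W := fun x => SetLike.coe_mem _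
  have hPx : ∀ x : E, x - P x ∈ V := by
    intro x
    have h := Submodule.projection_add_projection_eq_self hW x
    have : x - P x = ↑(V.projectionOnto W hW x) := by
      exact (Submodule.projection_eq_self_sub_projection hW.symm x).symm
    rw [this]
    exact SetLike.coe_mem _
  have hVG : ∀ x ∈ V, x ∈ G := by
    intro x hx
    simpa using (hV x).mp hx 1
  set w : ℕ → E := fun k => P (g k) with hw
  have hwW : ∀ k, w k ∈ W := fun k => hPmem _
  have hwG : ∀ k, w k ∈ G := by
    intro k
    have : w k = g k - (g k - P (g k)) := by simp [hw]
    rw [this]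
    exact AddSubgroup.sub_mem G (hgG k) (hVG _ (hPx (g k)))
  have hwne : ∀ k, w k ≠ 0 := by
    intro k hk
    have hk0 : P (g k) = 0 := hk
    exact hgV k (by simpa [hk0] using hPx (g k))
  have hgto : Tendsto g atTop (𝓝 0) := by
    apply squeeze_zero_norm (fun k => le_of_lt (hgn k))
    exact tendsto_one_div_add_atTop_nhds_zero_nat
  have hPcont : Continuous P := P.continuous_of_finiteDimensional
  have hwto : Tendsto w atTop (𝓝 0) := by
    have := (hPcont.tendsto 0).comp hgto
    simpa [hw, Function.comp_def] using this
  have hwnto : Tendsto (fun k => ‖w k‖) atTop (𝓝 0) := by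
    simpa using hwto.norm
  set u : ℕ → E := fun k => ‖w k‖⁻¹ • w k with hu
  have hun : ∀ k, ‖u k‖ = 1 := by
    intro k
    rw [hu]
    simp only [norm_smul, norm_inv, norm_norm]
    exact inv_mul_cancel₀ (norm_ne_zero_iff.mpr (hwne k))
  have huK : ∀ k, u k ∈ Metric.sphere (0 : E) 1 ∩ (W : Set E) := by
    intro k
    exact ⟨by simp [hun k], W.smul_mem _ (hwW k)⟩
  have hK : IsCompact (Metric.sphere (0 : E) 1 ∩ (W : Set E)) :=
    (isCompact_sphere 0 1).inter_right (Submodule.closed_of_finiteDimensional W)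
  obtain ⟨x, hxK, φ, hφ, hconv⟩ := hK.tendsto_subseq huK
  have hwφto : Tendsto (fun k => ‖w (φ k)‖) atTop (𝓝 0) :=
    hwnto.comp hφ.tendsto_atTop
  have hxV : x ∈ V := by
    rw [hV]
    intro t
    set n : ℕ → ℤ := fun k => ⌊t / ‖w (φ k)‖⌋ with hn
    have heq : ∀ k, (n k) • w (φ k) = ((n k : ℝ) * ‖w (φ k)‖) • u (φ k) := by
      intro k
      rw [hu, smul_smul, mul_assoc,
        mul_inv_cancel₀ (norm_ne_zero_iff.mpr (hwne (φ k))), mul_one,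
        Int.cast_smul_eq_zsmul]
    have hbound : ∀ k, ‖(n k : ℝ) * ‖w (φ k)‖ - t‖ ≤ ‖w (φ k)‖ := by
      intro k
      have hb : (0:ℝ) < ‖w (φ k)‖ := norm_pos_iff.mpr (hwne (φ k))
      have h1 : (n k : ℝ) ≤ t / ‖w (φ k)‖ := Int.floor_le _
      have h2 : t / ‖w (φ k)‖ - 1 ≤ (n k : ℝ) := le_of_lt (Int.sub_one_lt_floor _)
      have h1' : (n k : ℝ) * ‖w (φ k)‖ ≤ t := by
        rwa [← le_div_iff₀ hb]
      have h2' := mul_le_mul_of_nonneg_right h2 hb.le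
      rw [sub_mul, div_mul_cancel₀ _ hb.ne', one_mul] at h2'
      rw [Real.norm_eq_abs, abs_le]
      exact ⟨by linarith, by linarith⟩
    have hcoef : Tendsto (fun k => (n k : ℝ) * ‖w (φ k)‖) atTop (𝓝 t) := by
      rw [← tendsto_sub_nhds_zero_iff]
      exact squeeze_zero_norm hbound hwφto
    have hlim : Tendsto (fun k => (n k) • w (φ k)) atTop (𝓝 (t • x)) := by
      simp_rw [heq]
      exact hcoef.smul hconv
    exact hGc.mem_of_tendsto hlim
      (Filter.Eventually.of_forall fun k => AddSubgroup.zsmul_mem G (hwG (φ k)) _)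
  have hx0 : x = 0 := hW.disjoint.le_bot ⟨hxV, hxK.2⟩ 
  have : ‖x‖ = 1 := by simpa using hxK.1
  rw [hx0] at this
  simp at this


/-- The endomorphism of the torus `𝕋^d = (ℝ/ℤ)^d` induced by an integer matrix `A`. -/
noncomputable def torusEndo {d : ℕ} (A : Matrix (Fin d) (Fin d) ℤ) :
    (Fin d → AddCircle (1 : ℝ)) → (Fin d → AddCircle (1 : ℝ)) :=
  fun x i => ∑ j, A i j • x j

namespace TorusAux

variable {d : ℕ} (A : Matrix (Fin d) (Fin d) ℤ)

noncomputable def Areal : (Fin d → ℝ) →ₗ[ℝ] (Fin d → ℝ) :=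
  ((A.map (Int.cast : ℤ → ℝ)).mulVecLin)

def intLat (d : ℕ) : AddSubgroup (Fin d → ℝ) :=
  AddSubgroup.pi Set.univ fun _ => AddSubgroup.zmultiples (1 : ℝ)

lemma mem_intLat {x : Fin d → ℝ} : x ∈ intLat d ↔ ∀ i, ∃ m : ℤ, (m : ℝ) = x i := by
  simp only [intLat, AddSubgroup.mem_pi, Set.mem_univ, forall_true_left,
    AddSubgroup.mem_zmultiples_iff, zsmul_eq_mul, mul_one]

noncomputable def Lam : AddSubgroup (Fin d → ℝ) :=
  ⨆ n : ℕ, (intLat d).comap ((Areal A ^ n).toAddMonoidHom)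

lemma intLat_stable {x : Fin d → ℝ} (hx : x ∈ intLat d) : Areal A x ∈ intLat d := by
  rw [mem_intLat] at hx ⊢
  choose m hm using hx
  intro i
  refine ⟨∑ j, A i j * m j, ?_⟩
  simp only [Areal, Matrix.mulVecLin_apply, Matrix.mulVec, dotProduct, Matrix.map_apply]
  push_cast
  exact Finset.sum_congr rfl fun j _ => by rw [hm j]

lemma mem_Lam {x : Fin d → ℝ} : x ∈ Lam A ↔ ∃ n : ℕ, (Areal A ^ n) x ∈ intLat d := by
  rw [Lam, AddSubgroup.mem_iSup_of_directed]
  · simp [AddSubgroup.mem_comap]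
  · apply Monotone.directed_le
    apply monotone_nat_of_le_succ
    intro a x hx
    simp only [AddSubgroup.mem_comap, LinearMap.toAddMonoidHom_coe] at hx ⊢
    have : (Areal A ^ (a + 1)) x = Areal A ((Areal A ^ a) x) := by
      rw [pow_succ']; rfl
    rw [this]
    exact intLat_stable A hx

lemma Areal_mem_Lam {x : Fin d → ℝ} (hx : x ∈ Lam A) : Areal A x ∈ Lam A := by
  rw [mem_Lam] at hx ⊢
  obtain ⟨n, hn⟩ := hx
  refine ⟨n, ?_⟩
  have : (Areal A ^ n) (Areal A x) = Areal A ((Areal A ^ n) x) := by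
    rw [← Module.End.mul_apply, ← Module.End.mul_apply, ← pow_succ, ← pow_succ']
  rw [this]
  exact intLat_stable A hn



noncomputable def Ainv : (Fin d → ℝ) →ₗ[ℝ] (Fin d → ℝ) :=
  ((A.map (Int.cast : ℤ → ℝ))⁻¹).mulVecLin

lemma det_unit (hA : A.det ≠ 0) : IsUnit (A.map (Int.cast : ℤ → ℝ)).det := by
  have : (A.map (Int.cast : ℤ → ℝ)).det = ((A.det : ℝ)) := by
    rw [show A.map (Int.cast : ℤ → ℝ) = (Int.castRingHom ℝ).mapMatrix A from rfl,
      ← RingHom.map_det]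
    rfl
  rw [this]
  exact (isUnit_iff_ne_zero).mpr (by exact_mod_cast hA)

lemma Areal_Ainv (hA : A.det ≠ 0) (x : Fin d → ℝ) : Areal A (Ainv A x) = x := by
  have h := Matrix.mul_nonsing_inv _ (det_unit A hA)
  have h2 := congrArg Matrix.mulVecLin h
  rw [Matrix.mulVecLin_mul] at h2
  have h3 := congrArg (fun f => f x) h2
  simpa [Areal, Ainv] using h3

lemma Ainv_Areal (hA : A.det ≠ 0) (x : Fin d → ℝ) : Ainv A (Areal A x) = x := by
  have h := Matrix.nonsing_inv_mul _ (det_unit A hA)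
  have h2 := congrArg Matrix.mulVecLin h
  rw [Matrix.mulVecLin_mul] at h2
  have h3 := congrArg (fun f => f x) h2
  simpa [Areal, Ainv] using h3

lemma Ainv_mem_Lam (hA : A.det ≠ 0) {x : Fin d → ℝ} (hx : x ∈ Lam A) : Ainv A x ∈ Lam A := by
  rw [mem_Lam] at hx ⊢
  obtain ⟨n, hn⟩ := hx
  refine ⟨n + 1, ?_⟩
  have : (Areal A ^ (n + 1)) (Ainv A x) = (Areal A ^ n) (Areal A (Ainv A x)) := by
    rw [pow_succ]; rfl
  rw [this, Areal_Ainv A hA]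
  exact hn



/-- complexification map -/
noncomputable def iotaC (d : ℕ) : (Fin d → ℝ) →ₗ[ℝ] (Fin d → ℂ) :=
  LinearMap.pi fun i => Complex.ofRealAm.toLinearMap.comp (LinearMap.proj i)

lemma iotaC_apply {d : ℕ} (x : Fin d → ℝ) (i : Fin d) : iotaC d x i = (x i : ℂ) := rfl

theorem lemB {d : ℕ} (A : Matrix (Fin d) (Fin d) ℤ)
    (heig : ∀ lam : ℂ, (Matrix.charpoly (A.map (fun n : ℤ => (n : ℂ)))).IsRoot lam →
      ¬ (IsIntegral ℤ lam ∧ IsIntegral ℤ lam⁻¹))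
    {ι : Type} [Fintype ι] [Nonempty ι] [DecidableEq ι]
    (b : ι → (Fin d → ℝ)) (V : Submodule ℝ (Fin d → ℝ))
    (hAV : ∀ x ∈ V, Areal A x ∈ V)
    (hbV : ∀ c : ι → ℝ, (∑ i, c i • b i) ∈ V → c = 0)
    (C D : Matrix ι ι ℤ)
    (hC : ∀ j, Areal A (b j) - (∑ i, ((C i j : ℝ)) • b i) ∈ V)
    (hCD : C * D = 1) (hDC : D * C = 1) : False := by
  classical
  set Cc : Matrix ι ι ℂ := C.map (Int.cast : ℤ → ℂ) with hCc
  set Dc : Matrix ι ι ℂ := D.map (Int.cast : ℤ → ℂ) with hDc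
  have hmapmul : ∀ (M N : Matrix ι ι ℤ), M * N = 1 →
      M.map (Int.cast : ℤ → ℂ) * N.map (Int.cast : ℤ → ℂ) = 1 := by
    intro M N h
    have : (M * N).map (Int.castRingHom ℂ) =
        M.map (Int.castRingHom ℂ) * N.map (Int.castRingHom ℂ) := Matrix.map_mul
    rw [h] at this
    have h1 : (1 : Matrix ι ι ℤ).map (Int.castRingHom ℂ) = 1 :=
      Matrix.map_one _ (map_zero _) (map_one _)
    rw [h1] at this
    exact this.symm
  have hCcDc : Cc * Dc = 1 := hmapmul C D hCD
  have hDcCc : Dc * Cc = 1 := hmapmul D C hDC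
  -- a root of the charpoly of `Cc`
  have hdeg : Cc.charpoly.degree ≠ 0 := by
    rw [Polynomial.degree_eq_natDegree Cc.charpoly_monic.ne_zero,
      Matrix.charpoly_natDegree_eq_dim Cc]
    exact_mod_cast Fintype.card_ne_zero
  obtain ⟨lam, hlam⟩ := IsAlgClosed.exists_root Cc.charpoly hdeg
  obtain ⟨v, hv0, hCv⟩ := eigvec_of_root hlam
  have hlamne : lam ≠ 0 := by
    intro h0
    apply hv0
    have : Dc *ᵥ (Cc *ᵥ v) = v := by rw [Matrix.mulVec_mulVec, hDcCc, Matrix.one_mulVec]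
    rw [hCv, h0, zero_smul, Matrix.mulVec_zero] at this
    exact this.symm
  have hDv : Dc *ᵥ v = lam⁻¹ • v := by
    have h1 : Dc *ᵥ (Cc *ᵥ v) = v := by rw [Matrix.mulVec_mulVec, hDcCc, Matrix.one_mulVec]
    rw [hCv, Matrix.mulVec_smul] at h1
    have := congrArg (fun z => lam⁻¹ • z) h1
    simpa [smul_smul, inv_mul_cancel₀ hlamne] using this
  have hint1 : IsIntegral ℤ lam := isIntegral_of_charpoly_root hlam
  have hint2 : IsIntegral ℤ lam⁻¹ :=
    isIntegral_of_charpoly_root (root_of_eigvec hv0 hDv)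
  -- transfer the root to the characteristic polynomial of `A`
  set Ac : Matrix (Fin d) (Fin d) ℂ := A.map (Int.cast : ℤ → ℂ) with hAc
  have hinter : ∀ x : Fin d → ℝ, Ac.mulVecLin (iotaC d x) = iotaC d (Areal A x) := by
    intro x; funext i
    simp only [Matrix.mulVecLin_apply, Matrix.mulVec, dotProduct, iotaC_apply,
      Matrix.map_apply, Areal, hAc]
    push_cast
    rfl
  set Vc : Submodule ℂ (Fin d → ℂ) := Submodule.span ℂ (iotaC d '' (V : Set (Fin d → ℝ)))
    with hVcdef
  have hsubVc : ∀ x ∈ V, iotaC d x ∈ Vc := fun x hx => Submodule.subset_span ⟨x, hx, rfl⟩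
  have hAcVc : ∀ z ∈ Vc, Ac.mulVecLin z ∈ Vc := by
    intro z hz
    induction hz using Submodule.span_induction with
    | mem x hx =>
      obtain ⟨x', hx', rfl⟩ := hx
      rw [hinter]
      exact hsubVc _ (hAV x' hx')
    | zero => rw [map_zero]; exact Vc.zero_mem
    | add x y _ _ hx hy => rw [map_add]; exact Vc.add_mem hx hy
    | smul c x _ hx => rw [LinearMap.map_smul]; exact Vc.smul_mem c hx
  have hReIm : ∀ z ∈ Vc, (fun i => (z i).re) ∈ V ∧ (fun i => (z i).im) ∈ V := by
    intro z hz
    induction hz using Submodule.span_induction with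
    | mem x hx =>
      obtain ⟨x', hx', rfl⟩ := hx
      constructor
      · have : (fun i => ((iotaC d x') i).re) = x' := by
          funext i; rw [iotaC_apply]; exact Complex.ofReal_re _
        rw [this]; exact hx'
      · have : (fun i => ((iotaC d x') i).im) = 0 := by
          funext i; rw [iotaC_apply]; exact Complex.ofReal_im _
        rw [this]; exact V.zero_mem
    | zero =>
      refine ⟨?_, ?_⟩ <;>
      · simp only [Pi.zero_apply, Complex.zero_re, Complex.zero_im]
        exact V.zero_mem
    | add x y _ _ hx hy =>
      constructor
      · have : (fun i => ((x + y) i).re) = (fun i => (x i).re) + (fun i => (y i).re) := by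
          funext i; simp [Complex.add_re]
        rw [this]; exact V.add_mem hx.1 hy.1
      · have : (fun i => ((x + y) i).im) = (fun i => (x i).im) + (fun i => (y i).im) := by
          funext i; simp [Complex.add_im]
        rw [this]; exact V.add_mem hx.2 hy.2
    | smul c x _ hx =>
      have hre : (fun i => ((c • x) i).re)
          = c.re • (fun i => (x i).re) - c.im • (fun i => (x i).im) := by
        funext i; simp [Complex.mul_re, mul_comm]
      have him : (fun i => ((c • x) i).im)
          = c.re • (fun i => (x i).im) + c.im • (fun i => (x i).re) := by
        funext i; simp [Complex.mul_im]
      constructor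
      · rw [hre]; exact V.sub_mem (V.smul_mem _ hx.1) (V.smul_mem _ hx.2)
      · rw [him]; exact V.add_mem (V.smul_mem _ hx.2) (V.smul_mem _ hx.1)
  set y : Fin d → ℂ := ∑ j, v j • iotaC d (b j) with hy
  have hcast : ∀ (i j : ι), (((C i j : ℝ)) : ℂ) = ((C i j : ℂ)) := by intro i j; push_cast; rfl
  have hbridge : ∀ (r : ℝ) (z : Fin d → ℂ), r • z = (r : ℂ) • z := by
    intro r z; funext i; simp [Complex.real_smul]
  have h2 : ∀ j, iotaC d (Areal A (b j)) =
      (∑ i, (C i j : ℂ) • iotaC d (b i))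
        + iotaC d (Areal A (b j) - ∑ i, ((C i j : ℝ)) • b i) := by
    intro j
    rw [map_sub, map_sum]
    have : ∀ i ∈ Finset.univ, iotaC d (((C i j : ℝ)) • b i) = (C i j : ℂ) • iotaC d (b i) := by
      intro i _
      rw [LinearMap.map_smul, hbridge, hcast]
    rw [Finset.sum_congr rfl this]
    abel
  have h3 : Ac.mulVecLin y = lam • y
      + ∑ j, v j • iotaC d (Areal A (b j) - ∑ i, ((C i j : ℝ)) • b i) := by
    have h1 : Ac.mulVecLin y = ∑ j, v j • iotaC d (Areal A (b j)) := by
      rw [hy, map_sum]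
      exact Finset.sum_congr rfl fun j _ => by rw [LinearMap.map_smul, hinter]
    rw [h1]
    simp_rw [h2, smul_add, Finset.sum_add_distrib]
    congr 1
    calc ∑ j, v j • ∑ i, (C i j : ℂ) • iotaC d (b i)
        = ∑ j, ∑ i, (v j * (C i j : ℂ)) • iotaC d (b i) := by
          simp_rw [Finset.smul_sum, smul_smul]
      _ = ∑ i, ∑ j, (v j * (C i j : ℂ)) • iotaC d (b i) := Finset.sum_comm
      _ = ∑ i, ((Cc *ᵥ v) i) • iotaC d (b i) := by
          refine Finset.sum_congr rfl fun i _ => ?_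
          rw [← Finset.sum_smul]
          congr 1
          simp [Matrix.mulVec, dotProduct, hCc, mul_comm]
      _ = ∑ i, (lam * v i) • iotaC d (b i) := by
          rw [hCv]; simp
      _ = lam • ∑ i, v i • iotaC d (b i) := by
          simp_rw [Finset.smul_sum, smul_smul]
  have hAcy : Ac.mulVecLin y - lam • y ∈ Vc := by
    rw [h3]
    have : lam • y + ∑ j, v j • iotaC d (Areal A (b j) - ∑ i, ((C i j : ℝ)) • b i) - lam • y
        = ∑ j, v j • iotaC d (Areal A (b j) - ∑ i, ((C i j : ℝ)) • b i) := by abel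
    rw [this]
    exact Submodule.sum_mem _ fun j _ => Vc.smul_mem _ (hsubVc _ (hC j))
  have hynot : y ∉ Vc := by
    intro hmem
    obtain ⟨h1, h2⟩ := hReIm y hmem
    have hyre : (fun i => (y i).re) = ∑ j, (v j).re • b j := by
      funext i
      rw [hy]
      simp only [Finset.sum_apply, Pi.smul_apply, iotaC_apply, smul_eq_mul]
      rw [Complex.re_sum]
      refine Finset.sum_congr rfl fun j _ => ?_
      simp [Complex.mul_re]
    have hyim : (fun i => (y i).im) = ∑ j, (v j).im • b j := by
      funext i
      rw [hy]
      simp only [Finset.sum_apply, Pi.smul_apply, iotaC_apply, smul_eq_mul]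
      rw [Complex.im_sum]
      refine Finset.sum_congr rfl fun j _ => ?_
      simp [Complex.mul_im]
    rw [hyre] at h1
    rw [hyim] at h2
    have e1 := hbV _ h1
    have e2 := hbV _ h2
    apply hv0
    funext j
    have : v j = Complex.mk ((fun j => (v j).re) j) ((fun j => (v j).im) j) := by
      simp [Complex.ext_iff]
    rw [e1, e2] at this
    exact this
  set f : (Fin d → ℂ) →ₗ[ℂ] (Fin d → ℂ) := lam • LinearMap.id - Ac.mulVecLin with hf
  have hfval : ∀ z, f z = lam • z - Ac.mulVecLin z := fun z => rfl
  have hfVc : ∀ z ∈ Vc, f z ∈ Vc := by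
    intro z hz
    rw [hfval]
    exact Vc.sub_mem (Vc.smul_mem _ hz) (hAcVc z hz)
  have hnotinj : ¬ Function.Injective f := by
    intro hinj
    set fr : Vc →ₗ[ℂ] Vc := f.restrict hfVc with hfr
    have hinjr : Function.Injective fr := by
      intro a c hac
      have : f ↑a = f ↑c := congrArg Subtype.val hac
      exact Subtype.ext (hinj this)
    have hsurj := (LinearMap.injective_iff_surjective).mp hinjr
    have hfy : f y ∈ Vc := by
      have : f y = -(Ac.mulVecLin y - lam • y) := by rw [hfval]; abel
      rw [this]
      exact Vc.neg_mem hAcy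
    obtain ⟨z', hz'⟩ := hsurj ⟨f y, hfy⟩
    have he : f ↑z' = f y := congrArg Subtype.val hz'
    have := hinj he
    rw [← this] at hynot
    exact hynot z'.2
  have hker : LinearMap.ker f ≠ ⊥ := fun h => hnotinj (LinearMap.ker_eq_bot.mp h)
  obtain ⟨z, hzker, hz0⟩ := Submodule.exists_mem_ne_zero_of_ne_bot hker
  have hzeq : Ac *ᵥ z = lam • z := by
    have h0 : lam • z - Ac.mulVecLin z = 0 := hzker
    have := sub_eq_zero.mp h0
    simpa using this.symm
  have hroot : Ac.charpoly.IsRoot lam := root_of_eigvec hz0 hzeq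
  exact heig lam hroot ⟨hint1, hint2⟩


set_option maxHeartbeats 1600000 in
set_option synthInstance.maxHeartbeats 400000 in
theorem dense_Lam (hA : A.det ≠ 0)
    (heig : ∀ lam : ℂ, (Matrix.charpoly (A.map (fun n : ℤ => (n : ℂ)))).IsRoot lam →
      ¬ (IsIntegral ℤ lam ∧ IsIntegral ℤ lam⁻¹)) :
    Dense (Lam A : Set (Fin d → ℝ)) := by
  classical
  set G := (Lam A).topologicalClosure with hG
  have hGcoe : (G : Set (Fin d → ℝ)) = closure ((Lam A : Set (Fin d → ℝ))) := rfl
  have hGc : IsClosed (G : Set (Fin d → ℝ)) := AddSubgroup.isClosed_topologicalClosure _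
  have hLamG : ∀ x ∈ Lam A, x ∈ G := fun x hx => (Lam A).le_topologicalClosure hx
  set V : Submodule ℝ (Fin d → ℝ) :=
    { carrier := {x | ∀ t : ℝ, t • x ∈ G},
      add_mem' := fun ha hb t => by rw [smul_add]; exact G.add_mem (ha t) (hb t),
      zero_mem' := fun t => by rw [smul_zero]; exact G.zero_mem,
      smul_mem' := fun c x hx t => by rw [smul_smul]; exact hx (t * c) } with hVdef
  have hVmem : ∀ x, x ∈ V ↔ ∀ t : ℝ, t • x ∈ G := fun x => Iff.rfl
  have hVG : ∀ x ∈ V, x ∈ G := fun x hx => by simpa using (hVmem x).mp hx 1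
  by_cases hVtop : V = ⊤
  · intro x
    have h2 : x ∈ (G : Set (Fin d → ℝ)) := hVG x (hVtop ▸ Submodule.mem_top)
    rwa [hGcoe] at h2
  exfalso
  have hmapG : ∀ (f : (Fin d → ℝ) →ₗ[ℝ] (Fin d → ℝ)),
      (∀ y ∈ Lam A, f y ∈ Lam A) → ∀ x ∈ G, f x ∈ G := by
    intro f hf x hx
    have hx' : x ∈ closure (Lam A : Set (Fin d → ℝ)) := by
      rw [← hGcoe]; exact hx
    suffices h : f x ∈ closure (Lam A : Set (Fin d → ℝ)) by
      have : f x ∈ (G : Set (Fin d → ℝ)) := by rw [hGcoe]; exact h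
      exact this
    have h1 : f x ∈ f '' closure (Lam A : Set _) := ⟨x, hx', rfl⟩
    have h2 := image_closure_subset_closure_image f.continuous_of_finiteDimensional h1
    refine closure_mono ?_ h2
    rintro z ⟨w, hw, rfl⟩
    exact hf w hw
  have hAG : ∀ x ∈ G, Areal A x ∈ G := hmapG (Areal A) (fun y hy => Areal_mem_Lam A hy)
  have hAiG : ∀ x ∈ G, Ainv A x ∈ G := hmapG (Ainv A) (fun y hy => Ainv_mem_Lam A hA hy)
  have hAV : ∀ x ∈ V, Areal A x ∈ V := by
    intro x hx t
    rw [← LinearMap.map_smul]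
    exact hAG _ (hx t)
  have hAiV : ∀ x ∈ V, Ainv A x ∈ V := by
    intro x hx t
    rw [← LinearMap.map_smul]
    exact hAiG _ (hx t)
  obtain ⟨W, hWc⟩ := Submodule.exists_isCompl V
  set P : (Fin d → ℝ) →ₗ[ℝ] (Fin d → ℝ) :=
    W.subtype ∘ₗ Submodule.projectionOnto W V hWc.symm with hPdef
  have hPmem : ∀ x, P x ∈ W := fun x => SetLike.coe_mem _
  have hPsub : ∀ x, x - P x ∈ V := by
    intro x
    have h := Submodule.projection_add_projection_eq_self hWc x
    have h2 : x - P x = ↑(V.projectionOnto W hWc x) := by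
      exact (Submodule.projection_eq_self_sub_projection hWc.symm x).symm
    rw [h2]
    exact SetLike.coe_mem _
  have hPV : ∀ x ∈ V, P x = 0 := by
    intro x hx
    simp only [hPdef, LinearMap.comp_apply]
    rw [Submodule.projectionOnto_apply_of_mem_right hWc.symm hx]
    rfl
  have hPW : ∀ x ∈ W, P x = x := by
    intro x hx
    simp only [hPdef, LinearMap.comp_apply]
    exact congrArg _ (Submodule.projectionOnto_apply_left hWc.symm ⟨x, hx⟩)
  obtain ⟨r, hr0, hsmall⟩ := small_mem_linpart G hGc V W hVmem hWc
  set Γ : AddSubgroup (Fin d → ℝ) := (Lam A).map P.toAddMonoidHom with hΓdef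
  have hΓmem : ∀ γ, γ ∈ Γ ↔ ∃ x ∈ Lam A, P x = γ := by
    intro γ
    rw [hΓdef, AddSubgroup.mem_map]
    rfl
  have hΓW : ∀ γ ∈ Γ, γ ∈ W := by
    intro γ hγ
    obtain ⟨x, _, rfl⟩ := (hΓmem γ).mp hγ
    exact hPmem x
  have hΓG : ∀ γ ∈ Γ, γ ∈ G := by
    intro γ hγ
    obtain ⟨x, hx, rfl⟩ := (hΓmem γ).mp hγ
    have : P x = x - (x - P x) := by abel
    rw [this]
    exact G.sub_mem (hLamG x hx) (hVG _ (hPsub x))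
  have hPAV : ∀ x, P (Areal A (P x)) = P (Areal A x) := by
    intro x
    have hu : x - P x ∈ V := hPsub x
    have : Areal A (P x) = Areal A x - Areal A (x - P x) := by
      rw [← map_sub]; congr 1; abel
    rw [this, map_sub, hPV _ (hAV _ hu), sub_zero]
  have hPAiV : ∀ x, P (Ainv A (P x)) = P (Ainv A x) := by
    intro x
    have hu : x - P x ∈ V := hPsub x
    have : Ainv A (P x) = Ainv A x - Ainv A (x - P x) := by
      rw [← map_sub]; congr 1; abel
    rw [this, map_sub, hPV _ (hAiV _ hu), sub_zero]
  have hBΓ : ∀ γ ∈ Γ, P (Areal A γ) ∈ Γ := by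
    intro γ hγ
    obtain ⟨x, hx, rfl⟩ := (hΓmem γ).mp hγ
    rw [hPAV]
    exact (hΓmem _).mpr ⟨Areal A x, Areal_mem_Lam A hx, rfl⟩
  have hQΓ : ∀ γ ∈ Γ, P (Ainv A γ) ∈ Γ := by
    intro γ hγ
    obtain ⟨x, hx, rfl⟩ := (hΓmem γ).mp hγ
    rw [hPAiV]
    exact (hΓmem _).mpr ⟨Ainv A x, Ainv_mem_Lam A hA hx, rfl⟩
  have hBQ : ∀ γ ∈ W, P (Areal A (P (Ainv A γ))) = γ := by
    intro γ hγ
    rw [hPAV, Areal_Ainv A hA]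
    exact hPW γ hγ
  have hQB : ∀ γ ∈ W, P (Ainv A (P (Areal A γ))) = γ := by
    intro γ hγ
    rw [hPAiV, Ainv_Areal A hA]
    exact hPW γ hγ
  have hexΓ : ∃ γ ∈ Γ, γ ≠ 0 := by
    by_contra hcon
    push_neg at hcon
    apply hVtop
    have he : ∀ i : Fin d, (Pi.basisFun ℝ (Fin d)) i ∈ V := by
      intro i
      have heLam : (Pi.basisFun ℝ (Fin d)) i ∈ Lam A := by
        rw [mem_Lam]
        refine ⟨0, ?_⟩
        rw [pow_zero]
        rw [mem_intLat]
        intro j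
        refine ⟨if j = i then 1 else 0, ?_⟩
        simp only [Module.End.one_apply, Pi.basisFun_apply]
        rw [Pi.single_apply]
        split <;> simp
      have h0 : P ((Pi.basisFun ℝ (Fin d)) i) = 0 :=
        hcon _ ((hΓmem _).mpr ⟨_, heLam, rfl⟩)
      have h1 := hPsub ((Pi.basisFun ℝ (Fin d)) i)
      rwa [h0, sub_zero] at h1
    rw [eq_top_iff, ← (Pi.basisFun ℝ (Fin d)).span_eq]
    rw [Submodule.span_le]
    rintro z ⟨i, rfl⟩
    exact he i
  -- the lattice setup
  set ΓM : Submodule ℤ (Fin d → ℝ) := AddSubgroup.toIntSubmodule Γ with hΓM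
  set W' : Submodule ℝ (Fin d → ℝ) := Submodule.span ℝ (Γ : Set (Fin d → ℝ)) with hW'
  have hW'W : W' ≤ W := Submodule.span_le.mpr (fun γ hγ => hΓW γ hγ)
  set L : Submodule ℤ ↥W' := ΓM.comap ((W'.subtype).restrictScalars ℤ) with hLdef
  have hLmem : ∀ x : ↥W', x ∈ L ↔ (x : Fin d → ℝ) ∈ Γ := fun x => Iff.rfl
  haveI hdisc : DiscreteTopology ↥L := by
    rw [discreteTopology_iff_isOpen_singleton_zero]
    have hsing : ({0} : Set ↥L) = {x : ↥L | ‖((x : ↥W') : Fin d → ℝ)‖ < r} := by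
      ext x
      simp only [Set.mem_singleton_iff, Set.mem_setOf_eq]
      constructor
      · rintro rfl
        simpa using hr0
      · intro hx
        have hγ : ((x : ↥W') : Fin d → ℝ) ∈ Γ := x.2
        have h0 : ((x : ↥W') : Fin d → ℝ) = 0 := by
          have hVx := hsmall _ (hΓG _ hγ) hx
          exact (Submodule.disjoint_def.mp hWc.disjoint) _ hVx (hΓW _ hγ)
        exact Subtype.ext (Subtype.ext h0)
    rw [hsing]
    have hcont : Continuous (fun x : ↥L => ((x : ↥W') : Fin d → ℝ)) :=
      continuous_subtype_val.comp continuous_subtype_val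
    have him : {x : ↥L | ‖((x : ↥W') : Fin d → ℝ)‖ < r}
        = (fun x : ↥L => ((x : ↥W') : Fin d → ℝ)) ⁻¹' (Metric.ball 0 r) := by
      ext x
      simp [Metric.mem_ball, dist_zero_right]
    rw [him]
    exact Metric.isOpen_ball.preimage hcont
  have hsubim : (W'.subtype '' (L : Set ↥W')) = (Γ : Set (Fin d → ℝ)) := by
    ext z
    constructor
    · rintro ⟨w, hw, rfl⟩
      exact hw
    · intro hz
      exact ⟨⟨z, Submodule.subset_span hz⟩, hz, rfl⟩
  haveI hzl : IsZLattice ℝ L := by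
    constructor
    apply Submodule.map_injective_of_injective (Submodule.injective_subtype W')
    rw [Submodule.map_span, Submodule.map_top, Submodule.range_subtype, hsubim]
  haveI : Module.Finite ℤ ↥L := ZLattice.module_finite ℝ L
  haveI : Module.Free ℤ ↥L := ZLattice.module_free ℝ L
  set bb : Module.Basis (Module.Free.ChooseBasisIndex ℤ ↥L) ℤ ↥L := Module.Free.chooseBasis ℤ ↥L
    with hbb
  haveI : Nontrivial ↥L := by
    obtain ⟨γ0, hγ0, hne⟩ := hexΓ
    refine ⟨⟨⟨γ0, Submodule.subset_span hγ0⟩, hγ0⟩, 0, fun h => hne ?_⟩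
    have := congrArg (fun z : ↥L => ((z : ↥W') : Fin d → ℝ)) h
    simpa using this
  haveI : Nonempty (Module.Free.ChooseBasisIndex ℤ ↥L) := Module.Basis.index_nonempty bb
  set b : Module.Free.ChooseBasisIndex ℤ ↥L → (Fin d → ℝ) :=
    fun i => ((bb i : ↥W') : Fin d → ℝ) with hbdef
  have hbΓ : ∀ i, b i ∈ Γ := fun i => (bb i).2
  -- the two endomorphisms of L
  have hmkmem : ∀ (g : (Fin d → ℝ) →ₗ[ℝ] (Fin d → ℝ)), (∀ γ ∈ Γ, P (g γ) ∈ Γ) →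
      ∀ x : ↥L, P (g ((x : ↥W') : Fin d → ℝ)) ∈ Γ := fun g hg x => hg _ x.2
  have hLcoe : ∀ (m : ℤ) (z : ↥L), (((m • z : ↥L) : ↥W') : Fin d → ℝ)
      = (m : ℝ) • ((z : ↥W') : Fin d → ℝ) := by
    intro m z
    have h1 : ((m • z : ↥L) : ↥W') = m • (z : ↥W') := rfl
    rw [h1]
    have h2 : ((m • (z : ↥W') : ↥W') : Fin d → ℝ) = m • ((z : ↥W') : Fin d → ℝ) := rfl
    rw [h2, Int.cast_smul_eq_zsmul ℝ]
  set φ : ↥L →ₗ[ℤ] ↥L :=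
    { toFun := fun x => ⟨⟨P (Areal A ((x : ↥W') : Fin d → ℝ)),
        Submodule.subset_span (hmkmem _ hBΓ x)⟩, hmkmem _ hBΓ x⟩,
      map_add' := fun x y => by
        apply Subtype.ext; apply Subtype.ext
        simp [map_add],
      map_smul' := fun m x => by
        apply Subtype.ext; apply Subtype.ext
        simp only [RingHom.id_apply]
        rw [hLcoe, hLcoe, LinearMap.map_smul, LinearMap.map_smul] } with hφ
  set ψ : ↥L →ₗ[ℤ] ↥L :=
    { toFun := fun x => ⟨⟨P (Ainv A ((x : ↥W') : Fin d → ℝ)),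
        Submodule.subset_span (hmkmem _ hQΓ x)⟩, hmkmem _ hQΓ x⟩,
      map_add' := fun x y => by
        apply Subtype.ext; apply Subtype.ext
        simp [map_add],
      map_smul' := fun m x => by
        apply Subtype.ext; apply Subtype.ext
        simp only [RingHom.id_apply]
        rw [hLcoe, hLcoe, LinearMap.map_smul, LinearMap.map_smul] } with hψ
  have hmemW : ∀ x : ↥L, ((x : ↥W') : Fin d → ℝ) ∈ W := fun x => hW'W (x : ↥W').2
  have hφψ : φ.comp ψ = LinearMap.id := by
    apply LinearMap.ext
    intro x
    apply Subtype.ext; apply Subtype.ext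
    show P (Areal A (P (Ainv A ((x : ↥W') : Fin d → ℝ)))) = ((x : ↥W') : Fin d → ℝ)
    exact hBQ _ (hmemW x)
  have hψφ : ψ.comp φ = LinearMap.id := by
    apply LinearMap.ext
    intro x
    apply Subtype.ext; apply Subtype.ext
    show P (Ainv A (P (Areal A ((x : ↥W') : Fin d → ℝ)))) = ((x : ↥W') : Fin d → ℝ)
    exact hQB _ (hmemW x)
  haveI : Fintype (Module.Free.ChooseBasisIndex ℤ ↥L) := inferInstance
  set C : Matrix (Module.Free.ChooseBasisIndex ℤ ↥L) (Module.Free.ChooseBasisIndex ℤ ↥L) ℤ :=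
    LinearMap.toMatrix bb bb φ with hC
  set D : Matrix (Module.Free.ChooseBasisIndex ℤ ↥L) (Module.Free.ChooseBasisIndex ℤ ↥L) ℤ :=
    LinearMap.toMatrix bb bb ψ with hD
  have hCD : C * D = 1 := by
    rw [hC, hD, ← LinearMap.toMatrix_comp bb bb bb, hφψ, LinearMap.toMatrix_id]
  have hDC : D * C = 1 := by
    rw [hC, hD, ← LinearMap.toMatrix_comp bb bb bb, hψφ, LinearMap.toMatrix_id]
  have hCb : ∀ j, Areal A (b j) - (∑ i, ((C i j : ℝ)) • b i) ∈ V := by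
    intro j
    have hrepr : φ (bb j) = ∑ i, C i j • bb i := by
      rw [← bb.sum_repr (φ (bb j))]
      refine Finset.sum_congr rfl fun i _ => ?_
      congr 1
      rw [hC, LinearMap.toMatrix_apply]
    have hcoe : P (Areal A (b j)) = ∑ i, ((C i j : ℝ)) • b i := by
      have h1 := congrArg (fun z : ↥L => ((z : ↥W') : Fin d → ℝ)) hrepr
      rw [hφ] at h1
      simp only [LinearMap.coe_mk, AddHom.coe_mk] at h1
      rw [show ((((∑ i, C i j • bb i : ↥L) : ↥W')) : Fin d → ℝ)
          = ∑ i, ((C i j : ℝ)) • b i from ?_] at h1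
      · exact h1
      · push_cast
        refine Finset.sum_congr rfl fun i _ => ?_
        rw [Int.cast_smul_eq_zsmul]
    have := hPsub (Areal A (b j))
    rwa [hcoe] at this
  have hbV : ∀ c : _ → ℝ, (∑ i, c i • b i) ∈ V → c = 0 := by
    intro c hc
    have hmemW2 : ∑ i, c i • b i ∈ W :=
      Submodule.sum_mem _ fun i _ => W.smul_mem _ (hW'W (bb i : ↥W').2)
    have h0 : ∑ i, c i • b i = 0 :=
      Submodule.disjoint_def.mp hWc.disjoint _ hc hmemW2
    have hli : LinearIndependent ℝ b := by
      have h1 := (bb.ofZLatticeBasis ℝ L).linearIndependent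
      have h2 := h1.map' W'.subtype (Submodule.ker_subtype W')
      have h3 : (W'.subtype ∘ (bb.ofZLatticeBasis ℝ L)) = b := by
        funext i
        simp only [Function.comp_apply, Submodule.coe_subtype,
          Module.Basis.ofZLatticeBasis_apply]
        rfl
      rwa [h3] at h2
    exact funext (Fintype.linearIndependent_iff.mp hli c h0)
  exact lemB A heig b V hAV hbV C D hCb hCD hDC




noncomputable def piT : (Fin d → ℝ) → (Fin d → AddCircle (1 : ℝ)) :=
  fun x i => (x i : AddCircle (1 : ℝ))

lemma continuous_piT : Continuous (piT (d := d)) :=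
  continuous_pi fun i => (AddCircle.continuous_mk' (1:ℝ)).comp (continuous_apply i)

lemma surjective_piT : Function.Surjective (piT (d := d)) := by
  intro y
  refine ⟨fun i => (y i).out, funext fun i => ?_⟩
  exact Quotient.out_eq (y i)

lemma torusEndo_piT (x : Fin d → ℝ) : torusEndo A (piT x) = piT (Areal A x) := by
  funext i
  show ∑ j, A i j • ((x j : AddCircle (1:ℝ))) = _
  have h1 : ∀ j, A i j • ((x j : AddCircle (1:ℝ)))
      = (((A i j • x j : ℝ)) : AddCircle (1:ℝ)) := fun j => rfl
  simp_rw [h1]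
  show _ = ((Areal A x i : ℝ) : AddCircle (1:ℝ))
  have h2 : Areal A x i = ∑ j, (A i j • x j : ℝ) := by
    simp [Areal, Matrix.mulVec, dotProduct, zsmul_eq_mul]
  rw [h2]
  exact (map_sum (QuotientAddGroup.mk' (AddSubgroup.zmultiples (1:ℝ))) _ _).symm

lemma piT_intLat {x : Fin d → ℝ} (hx : x ∈ intLat d) : piT x = 0 := by
  funext i
  obtain ⟨m, hm⟩ := (mem_intLat).mp hx i
  show ((x i : ℝ) : AddCircle (1:ℝ)) = 0
  rw [← hm]
  have : ((m : ℝ)) ∈ AddSubgroup.zmultiples (1:ℝ) := ⟨m, by simp⟩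
  exact (QuotientAddGroup.eq_zero_iff _).mpr this


lemma torusEndo_iterate (n : ℕ) (x : Fin d → ℝ) :
    (torusEndo A)^[n] (piT x) = piT ((Areal A ^ n) x) := by
  induction n with
  | zero => simp [piT]
  | succ n ih =>
    rw [Function.iterate_succ_apply', ih, torusEndo_piT]
    have : (Areal A ^ (n+1)) x = Areal A ((Areal A ^ n) x) := by rw [pow_succ']; rfl
    rw [this]

theorem dense_S (hd : Dense (Lam A : Set (Fin d → ℝ))) :
    Dense {x : Fin d → AddCircle (1 : ℝ) | ∃ n : ℕ, (torusEndo A)^[n] x = 0} := by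
  intro y
  obtain ⟨v, rfl⟩ := surjective_piT y
  have h1 : piT v ∈ piT '' closure (Lam A : Set (Fin d → ℝ)) := ⟨v, hd v, rfl⟩
  have h2 : piT '' closure (Lam A : Set (Fin d → ℝ))
      ⊆ closure (piT '' (Lam A : Set (Fin d → ℝ))) :=
    image_closure_subset_closure_image (continuous_piT)
  refine closure_mono ?_ (h2 h1)
  rintro _ ⟨w, hw, rfl⟩
  obtain ⟨n, hn⟩ := (mem_Lam A).mp hw
  exact ⟨n, by rw [torusEndo_iterate, piT_intLat hn]⟩


end TorusAux

/-- If no eigenvalue of the invertible integer matrix `A` is an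
integral algebraic unit, then the set of points of `𝕋^d` annihilated by some power
of `T_A` is dense in `𝕋^d`. -/
theorem dense_preTorsion_of_no_unit_eigenvalue {d : ℕ} (A : Matrix (Fin d) (Fin d) ℤ)
    (hA : A.det ≠ 0)
    (heig : ∀ lam : ℂ, (Matrix.charpoly (A.map (fun n : ℤ => (n : ℂ)))).IsRoot lam →
      ¬ (IsIntegral ℤ lam ∧ IsIntegral ℤ lam⁻¹)) :
    Dense {x : Fin d → AddCircle (1 : ℝ) | ∃ n : ℕ, (torusEndo A)^[n] x = 0} :=
  TorusAux.dense_S A (TorusAux.dense_Lam A hA heig)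
end

section
/- Let A be a d×d integer matrix all of whose eigenvalues λ satisfy |λ| > 1 (an expansive matrix). Then no eigenvalue of A is an integral algebraic unit, and hence the union over n ≥ 0 of ker((T_A)^n) is dense in 𝕋^d. -/
open Polynomial Matrix Filter Topology

section AuxPart1

lemma multiset_abs_prod_le_one (s : Multiset ℂ) (h : ∀ x ∈ s, ‖x‖ ≤ 1) :
    (s.map (norm : ℂ → ℝ)).prod ≤ 1 := by
  induction s using Multiset.induction with
  | empty => simp
  | cons a s ih =>
    simp only [Multiset.map_cons, Multiset.prod_cons]
    have ha := h a (Multiset.mem_cons_self a s)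
    have hs := ih (fun x hx => h x (Multiset.mem_cons_of_mem hx))
    have hnn : 0 ≤ (s.map (norm : ℂ → ℝ)).prod :=
      Multiset.prod_nonneg (by simp only [Multiset.mem_map]; rintro _ ⟨x, -, rfl⟩; positivity)
    calc ‖a‖ * (s.map (norm : ℂ → ℝ)).prod ≤ 1 * 1 := by
          exact mul_le_mul ha hs hnn zero_le_one
      _ = 1 := by ring

lemma no_unit_eigenvalue {d : ℕ} (A : Matrix (Fin d) (Fin d) ℤ)
    (hexp : ∀ lam : ℂ, (Matrix.charpoly (A.map (fun n : ℤ => (n : ℂ)))).IsRoot lam →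
      1 < ‖lam‖)
    (lam : ℂ) (hroot : (Matrix.charpoly (A.map (fun n : ℤ => (n : ℂ)))).IsRoot lam) :
    ¬ (IsIntegral ℤ lam ∧ IsIntegral ℤ lam⁻¹) := by
  rintro ⟨h1, h2⟩
  set p : ℤ[X] := A.charpoly with hp
  have hpmap : Matrix.charpoly (A.map (fun n : ℤ => (n : ℂ))) = p.map (Int.castRingHom ℂ) :=
    Matrix.charpoly_map A (Int.castRingHom ℂ)
  have hpm : p.Monic := A.charpoly_monic
  have habs := hexp lam hroot
  have hlam0 : lam ≠ 0 := by
    intro h; rw [h] at habs; simp at habs; linarith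
  have hrev : Polynomial.aeval lam⁻¹ p.reverse = 0 := by
    letI := invertibleOfNonzero hlam0
    have h0 : Polynomial.eval₂ (Int.castRingHom ℂ) (⅟lam) p.reverse = 0 := by
      rw [Polynomial.eval₂_reverse_eq_zero_iff]
      have : (p.map (Int.castRingHom ℂ)).eval lam = 0 := by rw [← hpmap]; exact hroot
      rwa [Polynomial.eval_map] at this
    rw [invOf_eq_inv] at h0
    rw [Polynomial.aeval_def]
    exact h0
  have hdvd : minpoly ℤ lam⁻¹ ∣ p.reverse := minpoly.isIntegrallyClosed_dvd h2 hrev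
  set q : ℤ[X] := minpoly ℤ lam⁻¹ with hq
  set qC : ℂ[X] := q.map (Int.castRingHom ℂ) with hqC
  have hqmonic : qC.Monic := (minpoly.monic h2).map _
  have hdvdC : qC ∣ p.reverse.map (Int.castRingHom ℂ) := Polynomial.map_dvd _ hdvd
  have hrev0 : (p.reverse.map (Int.castRingHom ℂ)).eval 0 = 1 := by
    rw [Polynomial.eval_map, Polynomial.eval₂_at_zero, Polynomial.coeff_zero_reverse,
      hpm.leadingCoeff]
    simp
  have hroots : ∀ μ ∈ qC.roots, ‖μ‖ < 1 := by
    intro μ hμ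
    have hμroot : qC.eval μ = 0 := (Polynomial.isRoot_of_mem_roots hμ)
    have hrevroot : (p.reverse.map (Int.castRingHom ℂ)).eval μ = 0 := by
      obtain ⟨c, hc⟩ := hdvdC
      rw [hc, Polynomial.eval_mul, hμroot, zero_mul]
    have hμ0 : μ ≠ 0 := by
      intro h; rw [h, hrev0] at hrevroot; exact one_ne_zero hrevroot
    have hpinv : (p.map (Int.castRingHom ℂ)).eval μ⁻¹ = 0 := by
      letI := invertibleOfNonzero (inv_ne_zero hμ0)
      have hiff := Polynomial.eval₂_reverse_eq_zero_iff (Int.castRingHom ℂ) μ⁻¹ p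
      rw [invOf_eq_inv, inv_inv] at hiff
      rw [Polynomial.eval_map]
      rw [Polynomial.eval_map] at hrevroot
      exact hiff.mp hrevroot
    have h1μ : 1 < ‖μ⁻¹‖ := hexp μ⁻¹ (by rw [hpmap]; exact hpinv)
    rw [norm_inv] at h1μ
    have := (one_lt_inv_iff₀).mp h1μ
    exact this.2
  have hq0ne : qC.eval 0 ≠ 0 := by
    intro h
    obtain ⟨c, hc⟩ := hdvdC
    rw [hc, Polynomial.eval_mul, h, zero_mul] at hrev0
    exact one_ne_zero hrev0.symm
  have hsplits : qC.Splits := IsAlgClosed.splits _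
  have hcoeff : qC.coeff 0 = (-1) ^ qC.natDegree * qC.roots.prod :=
    hsplits.coeff_zero_eq_prod_roots_of_monic hqmonic
  have hcard : qC.roots.card = qC.natDegree := Polynomial.splits_iff_card_roots.mp hsplits
  have hdeg : 0 < qC.natDegree := by
    rw [hqC, (minpoly.monic h2).natDegree_map]
    exact minpoly.natDegree_pos h2
  have hlt : ‖qC.coeff 0‖ < 1 := by
    rw [hcoeff, norm_mul, norm_pow, norm_neg, norm_one, one_pow, one_mul]
    have hcardpos : 0 < qC.roots.card := hcard ▸ hdeg
    obtain ⟨μ0, hμ0mem⟩ := Multiset.card_pos_iff_exists_mem.mp hcardpos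
    obtain ⟨s, hs⟩ := Multiset.exists_cons_of_mem hμ0mem
    have habsprod : ‖qC.roots.prod‖ = (qC.roots.map (norm : ℂ → ℝ)).prod :=
      map_multiset_prod (normHom (α := ℂ)) qC.roots
    rw [habsprod, hs]
    simp only [Multiset.map_cons, Multiset.prod_cons]
    have hle : (s.map (norm : ℂ → ℝ)).prod ≤ 1 := by
      apply multiset_abs_prod_le_one
      intro x hx
      exact le_of_lt (hroots x (hs ▸ Multiset.mem_cons_of_mem hx))
    have hnn : 0 ≤ (s.map (norm : ℂ → ℝ)).prod :=
      Multiset.prod_nonneg (by simp only [Multiset.mem_map]; rintro _ ⟨x, -, rfl⟩; positivity)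
    have hμ0lt : ‖μ0‖ < 1 := hroots μ0 hμ0mem
    calc ‖μ0‖ * (s.map (norm : ℂ → ℝ)).prod ≤ ‖μ0‖ * 1 :=
          mul_le_mul_of_nonneg_left hle (by positivity)
      _ < 1 := by rw [mul_one]; exact hμ0lt
  have hcoeffint : qC.coeff 0 = ((q.coeff 0 : ℤ) : ℂ) := by
    rw [hqC, Polynomial.coeff_map]; rfl
  have hqcoeffne : q.coeff 0 ≠ 0 := by
    intro h
    exact hq0ne (by rw [← Polynomial.coeff_zero_eq_eval_zero, hcoeffint, h, Int.cast_zero])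
  have : (1 : ℝ) ≤ ‖qC.coeff 0‖ := by
    rw [hcoeffint]
    rw [Complex.norm_intCast]
    have := Int.one_le_abs hqcoeffne
    exact_mod_cast this
  linarith

end AuxPart1

section AuxSpectrum

lemma matrix_mem_spectrum_iff {d : ℕ} (M : Matrix (Fin d) (Fin d) ℂ) (k : ℂ) :
    k ∈ spectrum ℂ M ↔ M.charpoly.IsRoot k := by
  rw [spectrum.mem_iff]
  have hdet : M.charpoly.eval k = (algebraMap ℂ (Matrix (Fin d) (Fin d) ℂ) k - M).det := by
    rw [Matrix.charpoly, eval_det, Matrix.matPolyEquiv_charmatrix]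
    congr 1
    rw [Polynomial.eval_sub, Polynomial.eval_X, Polynomial.eval_C]
    congr 1
  rw [Matrix.isUnit_iff_isUnit_det, Polynomial.IsRoot, hdet, isUnit_iff_ne_zero, not_ne_iff]

lemma spectralRadius_inv_lt_one {d : ℕ} (M : Matrix (Fin d) (Fin d) ℂ) (hdet : M.det ≠ 0)
    (h : ∀ k : ℂ, M.charpoly.IsRoot k → 1 < ‖k‖) :
    spectralRadius ℂ M⁻¹ < 1 := by
  have hU : IsUnit M := (Matrix.isUnit_iff_isUnit_det M).mpr (isUnit_iff_ne_zero.mpr hdet)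
  obtain ⟨uM, huM⟩ := hU
  have hinv : (M⁻¹ : Matrix (Fin d) (Fin d) ℂ) = ↑uM⁻¹ := by
    rw [← huM, ← Matrix.coe_units_inv]
  have hspec : ∀ k ∈ spectrum ℂ M⁻¹, ‖k‖₊ < 1 := by
    intro k hk
    have hk0 : k ≠ 0 := by
      intro h0
      rw [h0, spectrum.zero_mem_iff] at hk
      exact hk (hinv ▸ uM⁻¹.isUnit)
    have hkinv : k⁻¹ ∈ spectrum ℂ M := by
      have := (spectrum.inv_mem_iff (r := Units.mk0 k hk0) (a := uM⁻¹)).mp (by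
        rw [← hinv]; exact hk)
      simpa [huM] using this
    have hroot : M.charpoly.IsRoot k⁻¹ := (matrix_mem_spectrum_iff M k⁻¹).mp hkinv
    have := h _ hroot
    rw [norm_inv] at this
    have h2 := (one_lt_inv_iff₀).mp this
    rw [← NNReal.coe_lt_coe]
    simpa using h2.2
  classical
  set F : Finset ℂ := M⁻¹.charpoly.roots.toFinset with hF
  set r : NNReal := F.sup (fun k => ‖k‖₊) with hr
  have hrlt : r < 1 := by
    rw [hr]
    apply Finset.sup_lt_iff (by norm_num : (⊥ : NNReal) < 1) |>.mpr
    intro k hkF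
    apply hspec
    rw [matrix_mem_spectrum_iff]
    exact Polynomial.isRoot_of_mem_roots (Multiset.mem_toFinset.mp hkF)
  have hle : spectralRadius ℂ M⁻¹ ≤ (r : ENNReal) := by
    rw [spectralRadius]
    apply iSup₂_le
    intro k hk
    have hkF : k ∈ F := Multiset.mem_toFinset.mpr (Polynomial.mem_roots'.mpr
      ⟨M⁻¹.charpoly_monic.ne_zero, (matrix_mem_spectrum_iff _ k).mp hk⟩)
    exact ENNReal.coe_le_coe.mpr (Finset.le_sup hkF)
  calc spectralRadius ℂ M⁻¹ ≤ (r : ENNReal) := hle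
    _ < ((1 : NNReal) : ENNReal) := ENNReal.coe_lt_coe.mpr hrlt
    _ = 1 := ENNReal.coe_one

end AuxSpectrum

section NormStuff

attribute [local instance] Matrix.linftyOpSeminormedAddCommGroup
  Matrix.linftyOpNormedAddCommGroup Matrix.linftyOpNonUnitalSemiNormedRing
  Matrix.linftyOpSemiNormedRing Matrix.linftyOpNonUnitalNormedRing Matrix.linftyOpNormedRing
  Matrix.linftyOpNormedSpace Matrix.linftyOpNormedAlgebra

lemma tendsto_norm_pow_of_spectralRadius_lt_one {d : ℕ} (M : Matrix (Fin d) (Fin d) ℂ)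
    (h : spectralRadius ℂ M < 1) :
    Tendsto (fun n : ℕ => ‖M ^ n‖) atTop (𝓝 0) := by
  haveI : CompleteSpace (Matrix (Fin d) (Fin d) ℂ) := FiniteDimensional.complete ℝ _
  obtain ⟨r, hr1, hr2⟩ := ENNReal.lt_iff_exists_nnreal_btwn.mp h
  have hgel := spectrum.pow_nnnorm_pow_one_div_tendsto_nhds_spectralRadius M
  have hev : ∀ᶠ n : ℕ in atTop, (‖M ^ n‖₊ : ENNReal) ^ (1 / (n : ℝ)) < (r : ENNReal) :=
    hgel.eventually_lt_const hr1
  have hrlt1 : (r : ℝ) < 1 := by exact_mod_cast hr2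
  have hbound : ∀ᶠ n : ℕ in atTop, ‖M ^ n‖ ≤ (r : ℝ) ^ n := by
    filter_upwards [hev, Filter.eventually_ge_atTop 1] with n hn hn1
    have hnne : (n : ℝ) ≠ 0 := by positivity
    have hpow : ((‖M ^ n‖₊ : ENNReal) ^ (1 / (n : ℝ))) ^ (n : ℝ) ≤ (r : ENNReal) ^ (n : ℝ) :=
      ENNReal.rpow_le_rpow hn.le (by positivity)
    rw [← ENNReal.rpow_mul, one_div, inv_mul_cancel₀ hnne, ENNReal.rpow_one] at hpow
    rw [ENNReal.rpow_natCast, ← ENNReal.coe_pow] at hpow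
    have hle := ENNReal.coe_le_coe.mp hpow
    calc ‖M ^ n‖ = ((‖M ^ n‖₊ : ℝ)) := rfl
      _ ≤ ((r ^ n : NNReal) : ℝ) := NNReal.coe_le_coe.mpr hle
      _ = (r : ℝ) ^ n := by push_cast; ring
  exact squeeze_zero' (Filter.Eventually.of_forall (fun n => norm_nonneg _)) hbound
    (tendsto_pow_atTop_nhds_zero_of_lt_one r.coe_nonneg hrlt1)

lemma map_ofReal_inv {d : ℕ} (B : Matrix (Fin d) (Fin d) ℝ) :
    B⁻¹.map Complex.ofReal = (B.map Complex.ofReal)⁻¹ := by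
  have hadj : (B.adjugate).map Complex.ofReal = (B.map Complex.ofReal).adjugate := by
    have := RingHom.map_adjugate Complex.ofRealHom B
    simp only [RingHom.mapMatrix_apply] at this; exact this
  have hdet : (B.map Complex.ofReal).det = (B.det : ℂ) := by
    have := RingHom.map_det Complex.ofRealHom B
    simp only [RingHom.mapMatrix_apply] at this; exact this.symm
  rw [Matrix.inv_def, Matrix.inv_def, hdet, ← hadj]
  ext i j
  simp [Matrix.map_apply, Matrix.smul_apply, smul_eq_mul, Ring.inverse_eq_inv',
    Complex.ofReal_mul, Complex.ofReal_inv]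

lemma linfty_norm_map_ofReal {d : ℕ} (C : Matrix (Fin d) (Fin d) ℝ) :
    ‖C.map Complex.ofReal‖ = ‖C‖ := by
  rw [← coe_nnnorm, ← coe_nnnorm]
  congr 1
  rw [Matrix.linfty_opNNNorm_def, Matrix.linfty_opNNNorm_def]
  congr 1
  funext i
  congr 1
  funext j
  simp [Matrix.map_apply]

lemma dense_preimage_lattice {d : ℕ} (B : Matrix (Fin d) (Fin d) ℝ) (hdet : IsUnit B.det)
    (hnorm : Tendsto (fun n : ℕ => ‖B⁻¹ ^ n‖) atTop (𝓝 0)) :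
    Dense (⋃ n : ℕ, {v : Fin d → ℝ | ∃ y : Fin d → ℤ, B ^ n *ᵥ v = fun i => (y i : ℝ)}) := by
  rw [Metric.dense_iff]
  intro t ε hε
  obtain ⟨N, hN⟩ := Metric.tendsto_atTop.mp hnorm ε hε
  have hNlt : ‖B⁻¹ ^ N‖ < ε := by
    have := hN N le_rfl
    rwa [Real.dist_eq, sub_zero, abs_of_nonneg (norm_nonneg _)] at this
  set w : Fin d → ℝ := B ^ N *ᵥ t with hw
  set y : Fin d → ℤ := fun i => round (w i) with hy
  set yR : Fin d → ℝ := fun i => (y i : ℝ) with hyR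
  set v : Fin d → ℝ := B⁻¹ ^ N *ᵥ yR with hv
  have hdetN : IsUnit (B ^ N).det := by rw [Matrix.det_pow]; exact hdet.pow N
  have hid : B ^ N * B⁻¹ ^ N = 1 := by
    rw [Matrix.inv_pow']; exact Matrix.mul_nonsing_inv _ hdetN
  have hid' : B⁻¹ ^ N * B ^ N = 1 := by
    rw [Matrix.inv_pow']; exact Matrix.nonsing_inv_mul _ hdetN
  refine ⟨v, ?_, Set.mem_iUnion.mpr ⟨N, y, ?_⟩⟩
  · rw [Metric.mem_ball, dist_eq_norm]
    have hvt : v - t = B⁻¹ ^ N *ᵥ (yR - w) := by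
      rw [Matrix.mulVec_sub, hv, hw, Matrix.mulVec_mulVec, hid', Matrix.one_mulVec]
    rw [hvt]
    have hyRw : ‖yR - w‖ ≤ 1 := by
      apply (pi_norm_le_iff_of_nonneg zero_le_one).mpr
      intro i
      have : |w i - (round (w i) : ℝ)| ≤ 1 / 2 := abs_sub_round (w i)
      rw [Pi.sub_apply, Real.norm_eq_abs, hyR, abs_sub_comm]
      calc |w i - (y i : ℝ)| ≤ 1/2 := this
        _ ≤ 1 := by norm_num
    calc ‖B⁻¹ ^ N *ᵥ (yR - w)‖ ≤ ‖B⁻¹ ^ N‖ * ‖yR - w‖ := Matrix.linfty_opNorm_mulVec _ _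
      _ ≤ ‖B⁻¹ ^ N‖ * 1 := by
          exact mul_le_mul_of_nonneg_left hyRw (norm_nonneg _)
      _ < ε := by rwa [mul_one]
  · show B ^ N *ᵥ v = yR
    rw [hv, Matrix.mulVec_mulVec, hid, Matrix.one_mulVec]

lemma dense_lattice_of_expansive {d : ℕ} (B : Matrix (Fin d) (Fin d) ℝ)
    (M : Matrix (Fin d) (Fin d) ℂ) (hMB : B.map Complex.ofReal = M)
    (hdetM : M.det ≠ 0)
    (hroots : ∀ k : ℂ, M.charpoly.IsRoot k → 1 < ‖k‖) :
    Dense (⋃ n : ℕ, {v : Fin d → ℝ | ∃ y : Fin d → ℤ, B ^ n *ᵥ v = fun i => (y i : ℝ)}) := by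
  have hdetB : B.det ≠ 0 := by
    intro h0
    apply hdetM
    rw [← hMB]
    have hd := RingHom.map_det Complex.ofRealHom B
    rw [RingHom.mapMatrix_apply] at hd
    rw [show (B.map Complex.ofReal) = B.map ⇑Complex.ofRealHom from rfl, ← hd, h0, map_zero]
  have hsrad : spectralRadius ℂ M⁻¹ < 1 := spectralRadius_inv_lt_one M hdetM hroots
  have hnormC := tendsto_norm_pow_of_spectralRadius_lt_one M⁻¹ hsrad
  have hnn : ∀ n : ℕ, ‖M⁻¹ ^ n‖ = ‖B⁻¹ ^ n‖ := by
    intro n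
    rw [← hMB, ← map_ofReal_inv]
    rw [show (B⁻¹.map Complex.ofReal) = Complex.ofRealHom.mapMatrix B⁻¹ from rfl,
      ← _root_.map_pow, RingHom.mapMatrix_apply]
    exact linfty_norm_map_ofReal _
  have hnorm : Tendsto (fun n : ℕ => ‖B⁻¹ ^ n‖) atTop (𝓝 0) := by
    simp only [hnn] at hnormC
    exact hnormC
  exact dense_preimage_lattice B (isUnit_iff_ne_zero.mpr hdetB) hnorm

end NormStuff

lemma torusEndo_coe {d : ℕ} (A : Matrix (Fin d) (Fin d) ℤ) (v : Fin d → ℝ) :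
    torusEndo A (fun i => (v i : AddCircle (1 : ℝ)))
      = fun i => ((((A.map (fun z : ℤ => (z : ℝ))) *ᵥ v) i : ℝ) : AddCircle (1 : ℝ)) := by
  funext i
  show (∑ j, A i j • ((v j : AddCircle (1 : ℝ)))) = _
  have hz : ∀ j, A i j • ((v j : AddCircle (1 : ℝ)))
      = ((QuotientAddGroup.mk' (AddSubgroup.zmultiples (1:ℝ))) (A i j • v j)) := by
    intro j
    rw [map_zsmul]
    rfl
  rw [Finset.sum_congr rfl (fun j _ => hz j), ← map_sum]
  show ((∑ j, A i j • v j : ℝ) : AddCircle (1:ℝ)) = _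
  congr 1
  simp [Matrix.mulVec, dotProduct, Matrix.map_apply, zsmul_eq_mul]

lemma torusEndo_iterate_coe {d : ℕ} (A : Matrix (Fin d) (Fin d) ℤ) (n : ℕ) (v : Fin d → ℝ) :
    (torusEndo A)^[n] (fun i => (v i : AddCircle (1 : ℝ)))
      = fun i => ((((A.map (fun z : ℤ => (z : ℝ))) ^ n *ᵥ v) i : ℝ) : AddCircle (1 : ℝ)) := by
  induction n generalizing v with
  | zero => simp
  | succ n ih =>
    rw [Function.iterate_succ_apply, torusEndo_coe, ih]
    funext i
    congr 1
    rw [Matrix.mulVec_mulVec, ← pow_succ]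

/-- If `A` is an expansive integer matrix (all eigenvalues `λ` satisfy
`|λ| > 1`), then no eigenvalue of `A` is an integral algebraic unit, and the union over
`n ≥ 0` of `ker (T_A)^n` is dense in `𝕋^d`. -/
theorem expansive_no_unit_eigenvalue_and_dense {d : ℕ} (A : Matrix (Fin d) (Fin d) ℤ)
    (hexp : ∀ lam : ℂ, (Matrix.charpoly (A.map (fun n : ℤ => (n : ℂ)))).IsRoot lam →
      1 < ‖lam‖) :
    (∀ lam : ℂ, (Matrix.charpoly (A.map (fun n : ℤ => (n : ℂ)))).IsRoot lam →
        ¬ (IsIntegral ℤ lam ∧ IsIntegral ℤ lam⁻¹)) ∧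
      Dense (⋃ n : ℕ, {x : Fin d → AddCircle (1 : ℝ) | (torusEndo A)^[n] x = 0}) := by
  constructor
  · exact no_unit_eigenvalue A hexp
  · -- density part
    set B : Matrix (Fin d) (Fin d) ℝ := A.map (fun z : ℤ => (z : ℝ)) with hB
    set M : Matrix (Fin d) (Fin d) ℂ := A.map (fun z : ℤ => (z : ℂ)) with hM
    have hMB : B.map Complex.ofReal = M := by
      ext i j; simp [hB, hM, Matrix.map_apply]
    have hdetM : M.det ≠ 0 := by
      intro h0
      have hds := Matrix.det_eq_sign_charpoly_coeff M
      rw [h0] at hds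
      have hc0 : M.charpoly.coeff 0 = 0 := by
        have hne : ((-1 : ℂ)) ^ Fintype.card (Fin d) ≠ 0 := by
          apply pow_ne_zero; norm_num
        rcases mul_eq_zero.mp hds.symm with h | h
        · exact absurd h hne
        · exact h
      have hzr : M.charpoly.IsRoot 0 := by
        rw [Polynomial.IsRoot, ← Polynomial.coeff_zero_eq_eval_zero]
        exact hc0
      have := hexp 0 hzr
      simp at this
      linarith
    have hdense := dense_lattice_of_expansive B M hMB hdetM hexp
    set π : (Fin d → ℝ) → (Fin d → AddCircle (1 : ℝ)) :=
      fun v i => (v i : AddCircle (1 : ℝ)) with hπ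
    have hcont : Continuous π :=
      continuous_pi fun i => (AddCircle.continuous_mk' 1).comp (continuous_apply i)
    have hsurj : Function.Surjective π := by
      intro x
      have hex : ∀ i, ∃ r : ℝ, (r : AddCircle (1 : ℝ)) = x i := by
        intro i
        obtain ⟨r, hr⟩ := QuotientAddGroup.mk'_surjective (AddSubgroup.zmultiples (1:ℝ)) (x i)
        exact ⟨r, hr⟩
      choose v hv using hex
      exact ⟨v, funext hv⟩
    have himg := (hsurj.denseRange).dense_image hcont hdense
    apply himg.mono
    rintro x ⟨v, hvS, rfl⟩
    rw [Set.mem_iUnion] at hvS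
    obtain ⟨n, y, hny⟩ := hvS
    apply Set.mem_iUnion.mpr ⟨n, ?_⟩
    show (torusEndo A)^[n] (π v) = 0
    rw [hπ]
    rw [torusEndo_iterate_coe]
    funext i
    rw [← hB, hny]
    show (((y i : ℝ)) : AddCircle (1:ℝ)) = 0
    rw [AddCircle.coe_eq_zero_iff]
    exact ⟨y i, by simp⟩
end

section
/- Let G = (ℤ_N)^ℕ and A an ℕ×ℕ integer matrix that is upper triangular with zero main diagonal, ones on the first superdiagonal, and upper bandwidth k (i.e., a_{i,j} = 0 unless i+1 ≤ j ≤ i+k, and a_{i,i+1} = 1). Then T_A(Y) = AY is a surjective endomorphism of G with finite kernel of cardinality at most N^k. -/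
/-!
Row `i` of `A Y = X` reads `Y (i + 1) = X i - ∑_{i + 1 < j ≤ i + k} A i j • Y j`, so a solution is
determined on `[0, n]` by its value at `0` and its values on `(n, n + k)`. For the first `n`
equations this makes the truncated system an injective, hence surjective, self-map of the finite
set `(ℤ_N)^n`; the sets of solutions of the first `n` equations are then nonempty, closed and
decreasing in the compact space `(ℤ_N)^ℕ`, so they meet. For the kernel, any finitely many
solutions are already separated on some `[0, n)`, hence by the `k` coordinates `0` and `(n, n + k)`.
-/

open Finset

noncomputable def infMulVec {M : Type*} [AddCommGroup M] (A : ℕ → ℕ → ℤ) (Y : ℕ → M) : ℕ → M :=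
  fun i => ∑ᶠ j, A i j • Y j

theorem Set.finite_and_natCard_le_of_forall_finset_card_le {α : Type*} {s : Set α} {B : ℕ}
    (h : ∀ t : Finset α, ↑t ⊆ s → t.card ≤ B) : s.Finite ∧ Nat.card s ≤ B := by
  have hfin : s.Finite := by
    by_contra hinf
    obtain ⟨t, hts, htcard⟩ := Set.Infinite.exists_subset_card_eq hinf (B + 1)
    have := h t hts
    omega
  exact ⟨hfin, Nat.card_eq_card_finite_toFinset hfin ▸ h _ hfin.coe_toFinset.subset⟩

theorem Finset.exists_forall_lt_eq_imp_eq {α : Type*} (s : Finset (ℕ → α)) :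
    ∃ n, ∀ Y ∈ s, ∀ Z ∈ s, (∀ j < n, Y j = Z j) → Y = Z := by
  have : ∀ p ∈ s ×ˢ s, ∀ᶠ n in Filter.atTop, (∀ j < n, p.1 j = p.2 j) → p.1 = p.2 := by
    rintro ⟨Y, Z⟩ -
    by_cases hYZ : Y = Z
    · exact Filter.Eventually.of_forall fun _ _ => hYZ
    obtain ⟨j, hj⟩ := Function.ne_iff.1 hYZ
    filter_upwards [Filter.eventually_gt_atTop j] with n hn hagree
    exact absurd (hagree j hn) hj
  obtain ⟨n, hn⟩ := (Filter.eventually_all_finset _).2 this |>.exists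
  exact ⟨n, fun Y hY Z hZ => hn (Y, Z) (mem_product.2 ⟨hY, hZ⟩)⟩

section Band

variable {M : Type*} [AddCommGroup M] {A : ℕ → ℕ → ℤ} {k : ℕ}

theorem infMulVec_apply_eq_sum_Icc (hband : ∀ i j, A i j ≠ 0 → i + 1 ≤ j ∧ j ≤ i + k)
    (Y : ℕ → M) (i : ℕ) : infMulVec A Y i = ∑ j ∈ Icc (i + 1) (i + k), A i j • Y j := by
  refine finsum_eq_sum_of_support_subset _ fun j hj => ?_
  simpa using hband i j (left_ne_zero_of_smul hj)

theorem one_le_of_band (hband : ∀ i j, A i j ≠ 0 → i + 1 ≤ j ∧ j ≤ i + k)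
    (hsuper : ∀ i, A i (i + 1) = 1) : 1 ≤ k := by
  have := hband 0 1 (by simp [hsuper 0])
  omega

theorem infMulVec_apply_eq_add_sum (hband : ∀ i j, A i j ≠ 0 → i + 1 ≤ j ∧ j ≤ i + k)
    (hsuper : ∀ i, A i (i + 1) = 1) (Y : ℕ → M) (i : ℕ) :
    infMulVec A Y i = Y (i + 1) + ∑ j ∈ Ioc (i + 1) (i + k), A i j • Y j := by
  have hk := one_le_of_band hband hsuper
  have hmem : i + 1 ∈ Icc (i + 1) (i + k) := by simp; omega
  rw [infMulVec_apply_eq_sum_Icc hband, ← add_sum_erase _ _ hmem, Icc_erase_left, hsuper, one_smul]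

theorem eq_of_infMulVec_eq (hband : ∀ i j, A i j ≠ 0 → i + 1 ≤ j ∧ j ≤ i + k)
    (hsuper : ∀ i, A i (i + 1) = 1) {Y Z : ℕ → M} {n : ℕ}
    (hYZ : ∀ i < n, infMulVec A Y i = infMulVec A Z i) (h0 : Y 0 = Z 0)
    (htail : ∀ j ∈ Ioo n (n + k), Y j = Z j) : ∀ j < n + k, Y j = Z j := by
  intro j hj
  induction hd : n + k - j using Nat.strong_induction_on generalizing j with
  | _ d ih =>
    rcases j with _ | i
    · exact h0
    by_cases hi : n < i + 1
    · exact htail _ (mem_Ioo.2 ⟨hi, hj⟩)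
    have hrec (W : ℕ → M) :
        W (i + 1) = infMulVec A W i - ∑ j ∈ Ioc (i + 1) (i + k), A i j • W j :=
      eq_sub_of_add_eq (infMulVec_apply_eq_add_sum hband hsuper W i).symm
    rw [hrec Y, hrec Z, hYZ i (by omega)]
    refine congrArg _ (sum_congr rfl fun l hl => ?_)
    rw [mem_Ioc] at hl
    rw [ih (n + k - l) (by omega) l (by omega) rfl]

theorem exists_infMulVec_eq_of_lt [Finite M]
    (hband : ∀ i j, A i j ≠ 0 → i + 1 ≤ j ∧ j ≤ i + k)
    (hsuper : ∀ i, A i (i + 1) = 1) (X : ℕ → M) (n : ℕ) :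
    ∃ Y : ℕ → M, ∀ i < n, infMulVec A Y i = X i := by
  let place (c : Fin n → M) (j : ℕ) : M := if h : j - 1 < n ∧ j ≠ 0 then c ⟨j - 1, h.1⟩ else 0
  have place_succ (c : Fin n → M) (t : Fin n) : place c (t + 1) = c t := by simp [place]
  have place_of_lt (c : Fin n → M) {j : ℕ} (hj : n < j) : place c j = 0 := dif_neg (by omega)
  have hinj : Function.Injective fun c (i : Fin n) => infMulVec A (place c) i := by
    intro c c' hcc'
    have hk := one_le_of_band hband hsuper
    have hagree := eq_of_infMulVec_eq hband hsuper (n := n) (Y := place c) (Z := place c')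
      (fun i hi => congrFun hcc' ⟨i, hi⟩) (by simp [place])
      (fun j hj => by rw [place_of_lt c (mem_Ioo.1 hj).1, place_of_lt c' (mem_Ioo.1 hj).1])
    funext t
    rw [← place_succ c, ← place_succ c', hagree _ (by omega)]
  obtain ⟨c, hc⟩ := Finite.injective_iff_surjective.1 hinj fun i : Fin n => X i
  exact ⟨place c, fun i hi => congrFun hc ⟨i, hi⟩⟩

theorem continuous_infMulVec_apply [TopologicalSpace M] [IsTopologicalAddGroup M]
    (hband : ∀ i j, A i j ≠ 0 → i + 1 ≤ j ∧ j ≤ i + k) (i : ℕ) :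
    Continuous fun Y : ℕ → M => infMulVec A Y i := by
  simp_rw [infMulVec_apply_eq_sum_Icc hband]
  fun_prop

theorem infMulVec_surjective [Finite M] (hband : ∀ i j, A i j ≠ 0 → i + 1 ≤ j ∧ j ≤ i + k)
    (hsuper : ∀ i, A i (i + 1) = 1) : Function.Surjective (infMulVec A : (ℕ → M) → ℕ → M) := by
  intro X
  let : TopologicalSpace M := ⊥
  have : DiscreteTopology M := ⟨rfl⟩
  let S (n : ℕ) : Set (ℕ → M) := {Y | ∀ i < n, infMulVec A Y i = X i}
  have hS_closed (n : ℕ) : IsClosed (S n) := by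
    simp only [S, Set.ofPred_forall]
    exact isClosed_biInter fun i _ =>
      isClosed_eq (continuous_infMulVec_apply hband i) continuous_const
  obtain ⟨Y, hY⟩ := IsCompact.nonempty_iInter_of_sequence_nonempty_isCompact_isClosed S
    (fun n Y hY i hi => hY i (by omega)) (exists_infMulVec_eq_of_lt hband hsuper X)
    (hS_closed 0).isCompact hS_closed
  exact ⟨Y, funext fun i => Set.mem_iInter.1 hY (i + 1) i i.lt_succ_self⟩

theorem finite_and_natCard_setOf_infMulVec_eq_zero_le [Finite M]
    (hband : ∀ i j, A i j ≠ 0 → i + 1 ≤ j ∧ j ≤ i + k) (hsuper : ∀ i, A i (i + 1) = 1) :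
    {Y : ℕ → M | infMulVec A Y = 0}.Finite ∧
      Nat.card {Y : ℕ → M | infMulVec A Y = 0} ≤ Nat.card M ^ k := by
  refine Set.finite_and_natCard_le_of_forall_finset_card_le fun s hs => ?_
  obtain ⟨n, hn⟩ := s.exists_forall_lt_eq_imp_eq
  have hk := one_le_of_band hband hsuper
  let W : Finset ℕ := insert 0 (Ioo n (n + k))
  have hW : W.card = k := by
    rw [card_insert_of_notMem (by simp), Nat.card_Ioo]
    omega
  have hinj : Set.InjOn (fun (Y : ℕ → M) (j : W) => Y j) s := by
    intro Y hY Z hZ hYZ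
    have hYZ' (j : ℕ) (hj : j ∈ W) : Y j = Z j := congrFun hYZ ⟨j, hj⟩
    refine hn Y hY Z hZ fun j hj => eq_of_infMulVec_eq hband hsuper (n := n)
      (fun i _ => by rw [hs hY, hs hZ]) (hYZ' 0 (mem_insert_self _ _))
      (fun l hl => hYZ' l (mem_insert_of_mem hl)) j (by omega)
  calc s.card = Nat.card s := (Nat.card_eq_finsetCard s).symm
    _ ≤ Nat.card (W → M) := Nat.card_le_card_of_injective _ hinj.injective
    _ = Nat.card M ^ k := by rw [Nat.card_fun, Nat.card_eq_finsetCard, hW]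

end Band

/-- Let `G = (ℤ_N)^ℕ` and let `A` be an integer matrix that is upper
triangular with zero main diagonal, ones on the first superdiagonal, and upper bandwidth
`k` (so `A i j = 0` unless `i+1 ≤ j ≤ i+k`, and `A i (i+1) = 1`). Then
`T_A Y = A Y` is a surjective endomorphism of `G` with finite kernel of cardinality at
most `N^k`. -/
theorem band_matrix_epimorphism (N : ℕ) (hN : 2 ≤ N) (k : ℕ)
    (A : ℕ → ℕ → ℤ)
    (hband : ∀ i j : ℕ, A i j ≠ 0 → i + 1 ≤ j ∧ j ≤ i + k)
    (hsuper : ∀ i : ℕ, A i (i + 1) = 1) :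
    Function.Surjective (fun Y : ℕ → ZMod N => fun i : ℕ => ∑ᶠ j : ℕ, A i j • Y j) ∧
      {Y : ℕ → ZMod N | (fun i : ℕ => ∑ᶠ j : ℕ, A i j • Y j) = 0}.Finite ∧
      Nat.card {Y : ℕ → ZMod N | (fun i : ℕ => ∑ᶠ j : ℕ, A i j • Y j) = 0} ≤ N ^ k := by
  have : NeZero N := ⟨by omega⟩
  obtain ⟨hfin, hcard⟩ := finite_and_natCard_setOf_infMulVec_eq_zero_le (M := ZMod N) hband hsuper
  rw [Nat.card_zmod] at hcard
  exact ⟨infMulVec_surjective hband hsuper, hfin, hcard⟩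
end

section
/- Let G be a compact abelian group with normalized Haar measure, A a surjective endomorphism with finite kernel, j ≥ 0, and η ∈ Ĝ. Define ω^j_η f(x) = |ker A^j|^{-1} ∑_{a ∈ ker A^j} η(a)⁻¹ f(x+a) for f ∈ L¹(G). Then the Fourier transform satisfies: (ω^j_η f)^(χ) = f̂(χ) if χ ∈ (ker A^j)^⊥ + η, and (ω^j_η f)^(χ) = 0 otherwise. -/
open MeasureTheory

/-- A continuous character of a topological abelian group, viewed as a
complex-valued function. -/
def IsChar {G : Type*} [AddCommGroup G] [TopologicalSpace G] (χ : G → ℂ) : Prop :=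
  Continuous χ ∧ χ 0 = 1 ∧ ∀ x y, χ (x + y) = χ x * χ y

/-- A character evaluated on natural multiples is a power. -/
lemma char_nsmul {G : Type*} [AddCommGroup G] [TopologicalSpace G] (χ : G → ℂ)
    (hχ : IsChar χ) (a : G) (n : ℕ) : χ (n • a) = χ a ^ n := by
  induction n with
  | zero => simpa using hχ.2.1
  | succ n ih => rw [succ_nsmul, hχ.2.2, ih, pow_succ]

/-- On a torsion element, a character takes a value of norm one. -/
lemma char_norm_one {G : Type*} [AddCommGroup G] [TopologicalSpace G] (χ : G → ℂ)
    (hχ : IsChar χ) (a : G) (n : ℕ) (hn : n ≠ 0) (ha : n • a = 0) : ‖χ a‖ = 1 := by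
  have h : χ a ^ n = 1 := by rw [← char_nsmul χ hχ a n, ha, hχ.2.1]
  exact Complex.norm_eq_one_of_pow_eq_one h hn

/-- Let `G` be a compact abelian group with normalized Haar measure,
`A` a continuous surjective endomorphism with finite kernel, `j ≥ 0` and `η` a character.
With `ω^j_η f (x) = |ker A^j|⁻¹ ∑_{a ∈ ker A^j} η(a)⁻¹ f(x+a)`, the Fourier transform
satisfies `(ω^j_η f)^(χ) = f̂(χ)` if `χ ∈ (ker A^j)^⊥ + η` (i.e. `χ = η` on `ker A^j`)
and `(ω^j_η f)^(χ) = 0` otherwise. -/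
theorem fourier_coeff_omega
    {G : Type*} [AddCommGroup G] [TopologicalSpace G] [IsTopologicalAddGroup G]
    [CompactSpace G] [MeasurableSpace G] [BorelSpace G]
    (μ : Measure G) [μ.IsAddHaarMeasure] [IsProbabilityMeasure μ]
    (A : G →+ G) (hA : Continuous A) (hAsurj : Function.Surjective A)
    (hker : {x : G | A x = 0}.Finite)
    (j : ℕ) (hkerj : {x : G | (⇑A)^[j] x = 0}.Finite)
    (η χ : G → ℂ) (hη : IsChar η) (hχ : IsChar χ)
    (f : G → ℂ) (hf : Integrable f μ) :
    ((∀ a : G, (⇑A)^[j] a = 0 → χ a = η a) →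
      ∫ x, ((hkerj.toFinset.card : ℂ)⁻¹ *
          ∑ a ∈ hkerj.toFinset, (η a)⁻¹ * f (x + a)) * (starRingEnd ℂ) (χ x) ∂μ
        = ∫ x, f x * (starRingEnd ℂ) (χ x) ∂μ) ∧
    ((¬ ∀ a : G, (⇑A)^[j] a = 0 → χ a = η a) →
      ∫ x, ((hkerj.toFinset.card : ℂ)⁻¹ *
          ∑ a ∈ hkerj.toFinset, (η a)⁻¹ * f (x + a)) * (starRingEnd ℂ) (χ x) ∂μ = 0) := by
  classical
  set K := hkerj.toFinset with hK
  have memK : ∀ a : G, a ∈ K ↔ (⇑A)^[j] a = 0 := fun a => hkerj.mem_toFinset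
  -- every element of the kernel is torsion
  have torsion : ∀ a ∈ K, ∃ n : ℕ, n ≠ 0 ∧ n • a = 0 := by
    intro a ha
    have hmaps : Set.MapsTo (fun n : ℕ => n • a) Set.univ {x : G | (⇑A)^[j] x = 0} := by
      intro n _
      have := iterate_map_nsmul A j a n
      simp only [Set.mem_setOf_eq]
      rw [this, (memK a).1 ha, smul_zero]
    obtain ⟨m, -, n, -, hmn, heq⟩ :=
      Set.infinite_univ.exists_ne_map_eq_of_mapsTo hmaps hkerj
    rcases lt_or_gt_of_ne hmn with h | h
    · refine ⟨n - m, by omega, ?_⟩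
      have : (n - m + m) • a = n • a := by rw [Nat.sub_add_cancel h.le]
      rw [add_nsmul, ← heq] at this
      exact add_right_cancel (b := m • a) (by rw [zero_add]; exact this)
    · refine ⟨m - n, by omega, ?_⟩
      have : (m - n + n) • a = m • a := by rw [Nat.sub_add_cancel h.le]
      rw [add_nsmul, heq] at this
      exact add_right_cancel (b := n • a) (by rw [zero_add]; exact this)
  have normχ : ∀ a ∈ K, ‖χ a‖ = 1 := by
    intro a ha; obtain ⟨n, hn, h⟩ := torsion a ha; exact char_norm_one χ hχ a n hn h
  have normη : ∀ a ∈ K, ‖η a‖ = 1 := by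
    intro a ha; obtain ⟨n, hn, h⟩ := torsion a ha; exact char_norm_one η hη a n hn h
  have ηne : ∀ a ∈ K, η a ≠ 0 := fun a ha => by
    intro h; have := normη a ha; rw [h] at this; simp at this
  have χne : ∀ a ∈ K, χ a ≠ 0 := fun a ha => by
    intro h; have := normχ a ha; rw [h] at this; simp at this
  have zeroK : (0 : G) ∈ K := (memK 0).2 (iterate_map_zero A j)
  have cardne : (K.card : ℂ) ≠ 0 := by
    exact_mod_cast Nat.cast_ne_zero.2 (Finset.card_ne_zero_of_mem zeroK)
  -- boundedness of χ
  obtain ⟨C, hC⟩ := isCompact_univ.exists_bound_of_continuousOn hχ.1.continuousOn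
  -- integrability of each summand
  have hint : ∀ a : G,
      Integrable (fun x => (η a)⁻¹ * (f (x + a) * (starRingEnd ℂ) (χ x))) μ := by
    intro a
    have h2 : (fun x => f (x + a) * (starRingEnd ℂ) (χ x))
        = fun x => (starRingEnd ℂ) (χ x) * f (x + a) := funext fun x => mul_comm _ _
    have h3 : Integrable (fun x => (starRingEnd ℂ) (χ x) * f (x + a)) μ := by
      refine Integrable.bdd_mul (c := C) (hf.comp_add_right a)
        ((Complex.continuous_conj.comp hχ.1).aestronglyMeasurable) (Filter.Eventually.of_forall fun x => ?_)
      simpa using hC x (Set.mem_univ x)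
    exact (h2 ▸ h3).const_mul _
  -- the key computation
  have key : ∫ x, ((K.card : ℂ)⁻¹ *
          ∑ a ∈ K, (η a)⁻¹ * f (x + a)) * (starRingEnd ℂ) (χ x) ∂μ
      = (K.card : ℂ)⁻¹ * (∑ a ∈ K, (η a)⁻¹ * χ a) *
          ∫ x, f x * (starRingEnd ℂ) (χ x) ∂μ := by
    have step1 : ∀ x : G, ((K.card : ℂ)⁻¹ *
          ∑ a ∈ K, (η a)⁻¹ * f (x + a)) * (starRingEnd ℂ) (χ x)
        = (K.card : ℂ)⁻¹ * ∑ a ∈ K, (η a)⁻¹ * (f (x + a) * (starRingEnd ℂ) (χ x)) := by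
      intro x
      rw [mul_assoc, Finset.sum_mul]
      congr 1
      exact Finset.sum_congr rfl fun a _ => by ring
    simp only [step1]
    rw [integral_const_mul, integral_finset_sum K (fun a _ => hint a)]
    have step2 : ∀ a ∈ K,
        ∫ x, (η a)⁻¹ * (f (x + a) * (starRingEnd ℂ) (χ x)) ∂μ
          = (η a)⁻¹ * χ a * ∫ x, f x * (starRingEnd ℂ) (χ x) ∂μ := by
      intro a ha
      rw [integral_const_mul]
      have sub : ∫ x, f (x + a) * (starRingEnd ℂ) (χ x) ∂μ
          = ∫ x, f x * (starRingEnd ℂ) (χ (x + (-a))) ∂μ := by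
        have := integral_add_right_eq_self (μ := μ)
          (fun x => f x * (starRingEnd ℂ) (χ (x + (-a)))) a
        rw [← this]
        congr 1
        ext x
        simp [add_assoc]
      rw [sub]
      have hχa : ∀ x : G, (starRingEnd ℂ) (χ (x + (-a))) = (starRingEnd ℂ) (χ x) * χ a := by
        intro x
        rw [hχ.2.2, map_mul]
        congr 1
        have h1 : χ (-a) = (χ a)⁻¹ := by
          have : χ a * χ (-a) = 1 := by rw [← hχ.2.2, add_neg_cancel, hχ.2.1]
          field_simp [χne a ha] at this ⊢
          linear_combination this
        rw [h1, map_inv₀, ← Complex.inv_eq_conj (normχ a ha), inv_inv]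
      simp only [hχa]
      have h4 : ∫ x, f x * ((starRingEnd ℂ) (χ x) * χ a) ∂μ
          = χ a * ∫ x, f x * (starRingEnd ℂ) (χ x) ∂μ := by
        rw [← integral_const_mul]
        congr 1
        ext x
        ring
      rw [h4]
      ring
    rw [Finset.sum_congr rfl step2, ← Finset.sum_mul]
    ring
  constructor
  · -- trivial character case
    intro h
    have hsum : ∑ a ∈ K, (η a)⁻¹ * χ a = (K.card : ℂ) := by
      rw [Finset.sum_congr rfl fun a ha => ?_, Finset.sum_const, nsmul_eq_mul, mul_one]
      rw [h a ((memK a).1 ha), inv_mul_cancel₀ (ηne a ha)]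
    rw [key, hsum, inv_mul_cancel₀ cardne, one_mul]
  · -- nontrivial character case
    intro h
    push_neg at h
    obtain ⟨b, hbK, hb⟩ := h
    have hbK' : b ∈ K := (memK b).2 hbK
    set S : ℂ := ∑ a ∈ K, (η a)⁻¹ * χ a with hS
    have hshift : S = (η b)⁻¹ * χ b * S := by
      have hmap : S = ∑ a ∈ K, (η (a + b))⁻¹ * χ (a + b) := by
        rw [hS]
        refine Finset.sum_nbij' (fun a => a - b) (fun a => a + b) ?_ ?_ ?_ ?_ ?_
        · intro a ha
          refine (memK _).2 ?_
          rw [iterate_map_sub]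
          rw [(memK a).1 ha, (memK b).1 hbK', sub_zero]
        · intro a ha
          refine (memK _).2 ?_
          rw [iterate_map_add]
          rw [(memK a).1 ha, (memK b).1 hbK', add_zero]
        · intro a _; simp
        · intro a _; simp
        · intro a _; simp
      conv_lhs => rw [hmap]
      rw [hS, Finset.mul_sum]
      refine Finset.sum_congr rfl fun a ha => ?_
      rw [hη.2.2, hχ.2.2, mul_inv]
      ring
    have hne1 : (η b)⁻¹ * χ b ≠ 1 := by
      intro h1
      rw [inv_mul_eq_one₀ (ηne b hbK')] at h1
      exact hb h1.symm
    have hSzero : S = 0 := by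
      have h0 : (1 - (η b)⁻¹ * χ b) * S = 0 := by linear_combination hshift
      rcases mul_eq_zero.1 h0 with h1 | h1
      · exact absurd (sub_eq_zero.1 h1).symm hne1
      · exact h1
    rw [key, hSzero]
    ring
end

section
/- Let G be a compact abelian group and A a surjective endomorphism with finite kernel such that ∪_j ker A^j is dense in G. Then there exists a sequence (K_j)_{j≥0} of subsets of Ĝ such that: K_0 = {0}; each K_j contains exactly one element of each coset η + Â^j(Ĝ) for η ∈ Ĝ; K_j ⊆ K_{j+1}; Â(K_j) ⊆ K_{j+1}; and ∪_{j≥0} K_j = Ĝ. -/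
open Function
attribute [local instance] Classical.propDecidable

namespace MSF

variable {D : Type*} [CommGroup D]

def Hs (F : Monoid.End D) (j : ℕ) : Subgroup D := MonoidHom.range (F ^ j : Monoid.End D)

lemma Hs_zero (F : Monoid.End D) (x : D) : x ∈ Hs F 0 := ⟨x, by rw [pow_zero]; rfl⟩

lemma Hs_succ (F : Monoid.End D) (j : ℕ) :
    Hs F (j + 1) = (Hs F j).map (F : D →* D) := by
  rw [Hs, pow_succ']
  exact MonoidHom.range_comp (F : D →* D) (F ^ j : Monoid.End D)

lemma Hs_le (F : Monoid.End D) (j : ℕ) : Hs F (j + 1) ≤ Hs F j := by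
  rintro x ⟨y, rfl⟩
  exact ⟨F y, by rw [pow_succ]; rfl⟩

lemma Hs_antitone (F : Monoid.End D) : Antitone (Hs F) :=
  antitone_nat_of_succ_le (Hs_le F)

lemma shiftH {H : Subgroup D} {a b c : D} (h1 : a⁻¹ * b ∈ H) (h2 : b⁻¹ * c ∈ H) :
    a⁻¹ * c ∈ H := by
  have h : a⁻¹ * c = (a⁻¹ * b) * (b⁻¹ * c) := by group
  rw [h]; exact mul_mem h1 h2

lemma symmH {H : Subgroup D} {a b : D} (h : a⁻¹ * b ∈ H) : b⁻¹ * a ∈ H := by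
  have h' : b⁻¹ * a = (a⁻¹ * b)⁻¹ := by group
  rw [h']; exact inv_mem h

lemma mapF_mem {F : Monoid.End D} {j : ℕ} {x : D} (h : x ∈ Hs F j) :
    F x ∈ Hs F (j + 1) := by
  rw [Hs_succ]; exact ⟨x, h, rfl⟩

lemma of_mapF_mem {F : Monoid.End D} (hF : Injective F) {j : ℕ} {x : D}
    (h : F x ∈ Hs F (j + 1)) : x ∈ Hs F j := by
  rw [Hs_succ] at h
  obtain ⟨y, hy, hyx⟩ := h
  exact hF hyx ▸ hy

lemma mem_succ_iff {F : Monoid.End D} {j : ℕ} {x : D} :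
    x ∈ Hs F (j + 1) ↔ ∃ y ∈ Hs F j, F y = x := by
  rw [Hs_succ]; exact Subgroup.mem_map

noncomputable def rep (F : Monoid.End D) (e : ℕ → D) (he : Surjective e) : ℕ → D → D
  | 0 => fun _ => 1
  | (j + 1) => fun η =>
    if h : ∃ χ, (∃ α, rep F e he j α = χ) ∧ χ⁻¹ * η ∈ Hs F (j + 1) then h.choose
    else if h2 : ∃ ψ, (∃ α, rep F e he j α = ψ) ∧ (F ψ)⁻¹ * η ∈ Hs F (j + 1) then F h2.choose
    else e (Nat.find (show ∃ k, (e k)⁻¹ * η ∈ Hs F (j + 1) from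
      (he η).imp fun k hk => by rw [hk, inv_mul_cancel]; exact one_mem _))

variable {F : Monoid.End D} {e : ℕ → D} {he : Surjective e}

lemma rep_mem (j : ℕ) (η : D) : (rep F e he j η)⁻¹ * η ∈ Hs F j := by
  cases j with
  | zero => exact Hs_zero F _
  | succ j =>
    rw [rep]; dsimp only
    split_ifs with h h2
    · exact h.choose_spec.2
    · exact h2.choose_spec.2
    · exact Nat.find_spec (p := fun k => (e k)⁻¹ * η ∈ Hs F (j + 1)) _


lemma rep_congr (hF : Injective F) :
    ∀ (j : ℕ) {η η' : D}, η⁻¹ * η' ∈ Hs F j → rep F e he j η = rep F e he j η' := by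
  intro j
  induction j with
  | zero => intro η η' _; rfl
  | succ j IH =>
    have uniq : ∀ {χ χ' : D}, (∃ α, rep F e he j α = χ) → (∃ α, rep F e he j α = χ') →
        χ⁻¹ * χ' ∈ Hs F j → χ = χ' := by
      rintro χ χ' ⟨α, rfl⟩ ⟨β, rfl⟩ hm
      have h1 := IH (rep_mem (he := he) j α)
      have h2 := IH (rep_mem (he := he) j β)
      have h3 := IH hm
      rw [← h1, h3, h2]
    intro η η' hη
    conv_lhs => rw [rep]
    conv_rhs => rw [rep]
    dsimp only
    by_cases h1 : ∃ χ, (∃ α, rep F e he j α = χ) ∧ χ⁻¹ * η ∈ Hs F (j + 1)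
    · have h1' : ∃ χ, (∃ α, rep F e he j α = χ) ∧ χ⁻¹ * η' ∈ Hs F (j + 1) := by
        obtain ⟨χ, hK, hm⟩ := h1
        exact ⟨χ, hK, shiftH hm hη⟩
      rw [dif_pos h1, dif_pos h1']
      exact uniq h1.choose_spec.1 h1'.choose_spec.1
        (Hs_le F j (shiftH (shiftH h1.choose_spec.2 hη) (symmH h1'.choose_spec.2)))
    · have h1' : ¬ ∃ χ, (∃ α, rep F e he j α = χ) ∧ χ⁻¹ * η' ∈ Hs F (j + 1) := by
        intro hx
        obtain ⟨χ, hK, hm⟩ := hx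
        exact h1 ⟨χ, hK, shiftH hm (symmH hη)⟩
      rw [dif_neg h1, dif_neg h1']
      by_cases h2 : ∃ ψ, (∃ α, rep F e he j α = ψ) ∧ (F ψ)⁻¹ * η ∈ Hs F (j + 1)
      · have h2' : ∃ ψ, (∃ α, rep F e he j α = ψ) ∧ (F ψ)⁻¹ * η' ∈ Hs F (j + 1) := by
          obtain ⟨ψ, hK, hm⟩ := h2
          exact ⟨ψ, hK, shiftH hm hη⟩
        rw [dif_pos h2, dif_pos h2']
        congr 1
        apply uniq h2.choose_spec.1 h2'.choose_spec.1
        have hm : (F h2.choose)⁻¹ * (F h2'.choose) ∈ Hs F (j + 1) :=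
          shiftH (shiftH h2.choose_spec.2 hη) (symmH h2'.choose_spec.2)
        have hm2 : F (h2.choose⁻¹ * h2'.choose) ∈ Hs F (j + 1) := by
          rw [map_mul, map_inv]; exact hm
        exact of_mapF_mem hF hm2
      · have h2' : ¬ ∃ ψ, (∃ α, rep F e he j α = ψ) ∧ (F ψ)⁻¹ * η' ∈ Hs F (j + 1) := by
          intro hx
          obtain ⟨ψ, hK, hm⟩ := hx
          exact h2 ⟨ψ, hK, shiftH hm (symmH hη)⟩
        rw [dif_neg h2, dif_neg h2']
        congr 1
        apply le_antisymm
        · exact Nat.find_le (shiftH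
            (Nat.find_spec (p := fun k => (e k)⁻¹ * η' ∈ Hs F (j + 1)) _) (symmH hη))
        · exact Nat.find_le (shiftH
            (Nat.find_spec (p := fun k => (e k)⁻¹ * η ∈ Hs F (j + 1)) _) hη)

lemma rep_self (hF : Injective F) {j : ℕ} {χ : D} (h : ∃ α, rep F e he j α = χ) :
    rep F e he j χ = χ := by
  obtain ⟨α, rfl⟩ := h
  exact rep_congr hF j (rep_mem j α)

lemma uniqK (hF : Injective F) {j : ℕ} {χ χ' : D}
    (h : ∃ α, rep F e he j α = χ) (h' : ∃ α, rep F e he j α = χ')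
    (hm : χ⁻¹ * χ' ∈ Hs F j) : χ = χ' := by
  rw [← rep_self hF h, ← rep_self hF h']
  exact rep_congr hF j hm

lemma rep_mono (hF : Injective F) {j : ℕ} {χ : D} (h : ∃ α, rep F e he j α = χ) :
    rep F e he (j + 1) χ = χ := by
  rw [rep]; dsimp only
  have hc : ∃ χ', (∃ α, rep F e he j α = χ') ∧ χ'⁻¹ * χ ∈ Hs F (j + 1) :=
    ⟨χ, h, by rw [inv_mul_cancel]; exact one_mem _⟩
  rw [dif_pos hc]
  exact uniqK hF hc.choose_spec.1 h (Hs_le F j hc.choose_spec.2)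


lemma repQ (hF : Injective F) : ∀ (j : ℕ) {χ : D}, (∃ α, rep F e he j α = χ) →
    (∃ ψ, F ψ = χ) → ∃ ψ, (∃ α, rep F e he j α = ψ) ∧ F ψ = χ := by
  intro j
  induction j with
  | zero =>
    rintro χ ⟨α, rfl⟩ _
    exact ⟨1, ⟨1, rfl⟩, map_one F⟩
  | succ j IH =>
    rintro χ ⟨α, hα⟩ hrange
    have hmem : χ⁻¹ * α ∈ Hs F (j + 1) := hα ▸ rep_mem (he := he) (j + 1) α
    rw [rep] at hα; dsimp only at hα
    by_cases h1 : ∃ χ', (∃ β, rep F e he j β = χ') ∧ χ'⁻¹ * α ∈ Hs F (j + 1)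
    · rw [dif_pos h1] at hα
      obtain ⟨ψ, ⟨β, hβ⟩, hψ⟩ := IH (hα ▸ h1.choose_spec.1) hrange
      exact ⟨ψ, ⟨ψ, rep_mono hF ⟨β, hβ⟩⟩, hψ⟩
    · rw [dif_neg h1] at hα
      by_cases h2 : ∃ ψ, (∃ β, rep F e he j β = ψ) ∧ (F ψ)⁻¹ * α ∈ Hs F (j + 1)
      · rw [dif_pos h2] at hα
        exact ⟨h2.choose, ⟨h2.choose, rep_mono hF h2.choose_spec.1⟩, hα⟩
      · exfalso
        obtain ⟨ψ₀, hψ₀⟩ := hrange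
        apply h2
        refine ⟨rep F e he j ψ₀, ⟨ψ₀, rfl⟩, ?_⟩
        have ha : (F (rep F e he j ψ₀))⁻¹ * F ψ₀ ∈ Hs F (j + 1) := by
          rw [← map_inv, ← map_mul]
          exact mapF_mem (rep_mem j ψ₀)
        have hb : (F ψ₀)⁻¹ * α ∈ Hs F (j + 1) := by
          rw [hψ₀]; exact hmem
        exact shiftH ha hb

lemma rep_adj (hF : Injective F) {j : ℕ} {ψ : D} (h : ∃ α, rep F e he j α = ψ) :
    rep F e he (j + 1) (F ψ) = F ψ := by
  rw [rep]; dsimp only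
  by_cases h1 : ∃ χ, (∃ α, rep F e he j α = χ) ∧ χ⁻¹ * F ψ ∈ Hs F (j + 1)
  · rw [dif_pos h1]
    have hm := h1.choose_spec.2
    have hrange : ∃ ψ₀, F ψ₀ = h1.choose := by
      obtain ⟨y, hy, hyx⟩ := mem_succ_iff.mp (symmH hm)
      refine ⟨ψ * y, ?_⟩
      rw [map_mul, hyx]
      group
    obtain ⟨ψ', hψ'K, hψ'⟩ := repQ hF j h1.choose_spec.1 hrange
    have hmm : ψ'⁻¹ * ψ ∈ Hs F j := by
      apply of_mapF_mem hF
      rw [map_mul, map_inv, hψ']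
      exact hm
    rw [← hψ', uniqK hF hψ'K h hmm]
  · rw [dif_neg h1]
    have h2 : ∃ ψ', (∃ α, rep F e he j α = ψ') ∧ (F ψ')⁻¹ * F ψ ∈ Hs F (j + 1) :=
      ⟨ψ, h, by rw [inv_mul_cancel]; exact one_mem _⟩
    rw [dif_pos h2]
    congr 1
    exact uniqK hF h2.choose_spec.1 h
      (of_mapF_mem hF (by rw [map_mul, map_inv]; exact h2.choose_spec.2))


lemma cov_base (hF : Injective F) (htriv : ∀ x : D, (∀ j, x ∈ Hs F j) → x = 1)
    {η : D} (hη : ¬ ∃ ψ, F ψ = η) : ∃ j, rep F e he j η = η := by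
  by_contra hno
  push_neg at hno
  obtain ⟨i, hi⟩ := he η
  have hJk : ∀ k, e k ≠ η → ∃ J, ∀ j, J ≤ j → (e k)⁻¹ * η ∉ Hs F j := by
    intro k hk
    have hne1 : (e k)⁻¹ * η ≠ 1 := by
      intro hcon
      rw [inv_mul_eq_one] at hcon
      exact hk hcon
    have : ∃ J, (e k)⁻¹ * η ∉ Hs F J := by
      by_contra hall; push_neg at hall; exact hne1 (htriv _ hall)
    obtain ⟨J, hJ⟩ := this
    exact ⟨J, fun j hj hmem => hJ (Hs_antitone F hj hmem)⟩
  have huni : ∀ n : ℕ, ∃ J, ∀ k, k ≤ n → e k ≠ η → ∀ j, J ≤ j → (e k)⁻¹ * η ∉ Hs F j := by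
    intro n
    induction n with
    | zero =>
      by_cases h0 : e 0 = η
      · exact ⟨0, fun k hk hne => absurd (Nat.le_zero.mp hk ▸ h0) hne⟩
      · obtain ⟨J, hJ⟩ := hJk 0 h0
        exact ⟨J, fun k hk hne j hj => Nat.le_zero.mp hk ▸ hJ j hj⟩
    | succ n IHn =>
      obtain ⟨J1, hJ1⟩ := IHn
      by_cases hs : e (n + 1) = η
      · refine ⟨J1, fun k hk hne j hj => ?_⟩
        have hkn : k ≤ n := by
          rcases Nat.lt_succ_iff_lt_or_eq.mp (Nat.lt_succ_of_le hk) with h | h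
          · omega
          · exact absurd (h ▸ hs) hne
        exact hJ1 k hkn hne j hj
      · obtain ⟨J2, hJ2⟩ := hJk (n + 1) hs
        refine ⟨max J1 J2, fun k hk hne j hj => ?_⟩
        rcases Nat.le_succ_iff.mp hk with h | h
        · exact hJ1 k h hne j (le_trans (le_max_left _ _) hj)
        · subst h; exact hJ2 j (le_trans (le_max_right _ _) hj)
  obtain ⟨J, hJ⟩ := huni i
  have step : ∀ j, J ≤ j → rep F e he (j + 1) η = rep F e he j η := by
    intro j hj
    have hK : ∃ α, rep F e he j α = rep F e he (j + 1) η := by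
      conv_rhs => rw [rep]
      dsimp only
      by_cases h1 : ∃ χ, (∃ α, rep F e he j α = χ) ∧ χ⁻¹ * η ∈ Hs F (j + 1)
      · rw [dif_pos h1]; exact h1.choose_spec.1
      · exfalso
        by_cases h2 : ∃ ψ, (∃ α, rep F e he j α = ψ) ∧ (F ψ)⁻¹ * η ∈ Hs F (j + 1)
        · obtain ⟨ψ, _, hm⟩ := h2
          obtain ⟨y, hy, hyx⟩ := mem_succ_iff.mp hm
          exact hη ⟨ψ * y, by rw [map_mul, hyx]; group⟩
        · -- case 3 : the fresh representative would be chosen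
          have hval : rep F e he (j + 1) η =
              e (Nat.find (show ∃ k, (e k)⁻¹ * η ∈ Hs F (j + 1) from
                (he η).imp fun k hk => by rw [hk, inv_mul_cancel]; exact one_mem _)) := by
            rw [rep]; dsimp only
            rw [dif_neg h1, dif_neg h2]
          set pf := (show ∃ k, (e k)⁻¹ * η ∈ Hs F (j + 1) from
            (he η).imp fun k hk => by rw [hk, inv_mul_cancel]; exact one_mem _) with hpf
          have hki : Nat.find pf ≤ i :=
            Nat.find_le (by rw [hi, inv_mul_cancel]; exact one_mem _)
          have hspec := Nat.find_spec pf
          by_cases hek : e (Nat.find pf) = η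
          · exact hno (j + 1) (by rw [hval, hek])
          · exact hJ _ hki hek (j + 1) (by omega) hspec
    have hmem1 : (rep F e he (j + 1) η)⁻¹ * η ∈ Hs F j :=
      Hs_le F j (rep_mem (j + 1) η)
    exact uniqK hF hK ⟨η, rfl⟩ (shiftH hmem1 (symmH (rep_mem j η)))
  have const : ∀ j, J ≤ j → rep F e he j η = rep F e he J η := by
    intro j hj
    induction j with
    | zero => rw [Nat.le_zero.mp hj]
    | succ j IHj =>
      rcases Nat.le_succ_iff.mp hj with h | h
      · rw [step j h, IHj h]
      · subst h; rfl
  have hall : ∀ j, (rep F e he J η)⁻¹ * η ∈ Hs F j := by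
    intro j
    rcases le_total j J with h | h
    · exact Hs_antitone F h (rep_mem J η)
    · have hx := rep_mem (F := F) (e := e) (he := he) j η
      rwa [const j h] at hx
  have hfin : rep F e he J η = η := by
    rw [← inv_mul_eq_one]; exact htriv _ hall
  exact hno J hfin


lemma cov (hF : Injective F) (htriv : ∀ x : D, (∀ j, x ∈ Hs F j) → x = 1) (η : D) :
    ∃ j, rep F e he j η = η := by
  have aux : ∀ N : ℕ, ∀ η : D, η ∉ Hs F N → ∃ j, rep F e he j η = η := by
    intro N
    induction N with
    | zero => intro η hη; exact absurd (Hs_zero F η) hη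
    | succ N IHN =>
      intro η hη
      by_cases hr : ∃ ψ, F ψ = η
      · obtain ⟨ψ, rfl⟩ := hr
        have hψ : ψ ∉ Hs F N := fun hm => hη (mapF_mem hm)
        obtain ⟨j, hj⟩ := IHN ψ hψ
        exact ⟨j + 1, rep_adj hF ⟨ψ, hj⟩⟩
      · exact cov_base hF htriv hr
  by_cases h1 : η = 1
  · exact ⟨0, by rw [h1]; rfl⟩
  · have hN : ∃ N, η ∉ Hs F N := by
      by_contra hall; push_neg at hall; exact h1 (htriv η hall)
    obtain ⟨N, hN⟩ := hN
    exact aux N η hN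

end MSF


lemma circle_coe_pow (z : Circle) (k : ℕ) : ((z ^ k : Circle) : ℂ) = (z : ℂ) ^ k := by
  induction k with
  | zero => simp
  | succ k IH => rw [pow_succ, pow_succ, Circle.coe_mul, IH]

lemma circle_sep (z : Circle) (hz : z ≠ 1) :
    ∃ k : ℕ, (1 : ℝ) ≤ ‖((z ^ k : Circle) : ℂ) - 1‖ := by
  have key : ∃ k : ℕ, (((z ^ k : Circle) : ℂ)).re ≤ 1 / 2 := by
    set θ := Complex.arg (z : ℂ) with hθdef
    have hθ0 : θ ≠ 0 := by
      intro h
      exact hz (Circle.arg_eq_arg.mp (by rw [← hθdef, h]; simp))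
    have hmem := Complex.arg_mem_Ioc (z : ℂ)
    have hzexp : (z : ℂ) = Complex.exp (↑θ * Complex.I) := by
      have h := Complex.norm_mul_exp_arg_mul_I (z : ℂ)
      rw [Circle.norm_coe] at h
      simpa using h.symm
    set t := |θ| with htdef
    have ht0 : 0 < t := abs_pos.mpr hθ0
    have htπ : t ≤ Real.pi := abs_le.mpr ⟨le_of_lt hmem.1, hmem.2⟩
    obtain ⟨k, hkl, hku⟩ : ∃ k : ℕ, Real.pi / 3 ≤ (k : ℝ) * t ∧ (k : ℝ) * t ≤ Real.pi := by
      by_cases hcase : Real.pi / 3 ≤ t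
      · exact ⟨1, by simpa using hcase, by simpa using htπ⟩
      · push_neg at hcase
        refine ⟨⌈(Real.pi / 3) / t⌉₊, (div_le_iff₀ ht0).mp (Nat.le_ceil _), ?_⟩
        have h1 : (⌈(Real.pi / 3) / t⌉₊ : ℝ) < (Real.pi / 3) / t + 1 :=
          Nat.ceil_lt_add_one (by positivity)
        have h2 : (⌈(Real.pi / 3) / t⌉₊ : ℝ) * t < ((Real.pi / 3) / t + 1) * t :=
          mul_lt_mul_of_pos_right h1 ht0
        have h3 : ((Real.pi / 3) / t + 1) * t = Real.pi / 3 + t := by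
          field_simp
        nlinarith [Real.pi_pos]
    refine ⟨k, ?_⟩
    have hcoe := circle_coe_pow z k
    have hre : (((z ^ k : Circle)) : ℂ).re = Real.cos ((k : ℝ) * θ) := by
      rw [hcoe, hzexp, ← Complex.exp_nat_mul]
      have h4 : (k : ℂ) * (↑θ * Complex.I) = (↑((k : ℝ) * θ) : ℂ) * Complex.I := by
        push_cast; ring
      rw [h4, Complex.exp_ofReal_mul_I_re]
    rw [hre, ← Real.cos_abs, abs_mul, Nat.abs_cast, ← htdef]
    calc Real.cos ((k : ℝ) * t) ≤ Real.cos (Real.pi / 3) :=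
          Real.cos_le_cos_of_nonneg_of_le_pi (by positivity) hku hkl
      _ = 1 / 2 := Real.cos_pi_div_three
  obtain ⟨k, hk⟩ := key
  refine ⟨k, ?_⟩
  set w := ((z ^ k : Circle) : ℂ) with hw
  have hn : w.re * w.re + w.im * w.im = 1 := by
    have := Circle.normSq_coe (z ^ k)
    rwa [Complex.normSq_apply] at this
  have habs2 : (‖w - 1‖) ^ 2 = (w.re - 1) ^ 2 + w.im ^ 2 := by
    rw [Complex.sq_norm, Complex.normSq_apply]
    simp [Complex.sub_re, Complex.sub_im]
    ring
  nlinarith [norm_nonneg (w - 1), habs2, hk, hn]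

lemma dual_countable (G : Type*) [CommGroup G] [TopologicalSpace G] [IsTopologicalGroup G]
    [CompactSpace G] [SecondCountableTopology G] : Countable (PontryaginDual G) := by
  have sep : ∀ χ ψ : PontryaginDual G, χ ≠ ψ →
      (1 : ℝ) ≤ dist (χ.toContinuousMap) (ψ.toContinuousMap) := by
    intro χ ψ hne
    have hφ : χ * ψ⁻¹ ≠ 1 := by
      intro h
      exact hne (mul_inv_eq_one.mp h)
    have hx₀ : ∃ x₀, (χ * ψ⁻¹) x₀ ≠ 1 := by
      by_contra hall
      push_neg at hall
      exact hφ (ContinuousMonoidHom.ext fun x => (hall x).trans rfl)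
    obtain ⟨x₀, hx₀⟩ := hx₀
    obtain ⟨k, hk⟩ := circle_sep ((χ * ψ⁻¹) x₀) hx₀
    set y := x₀ ^ k with hy
    have hval : ((χ * ψ⁻¹) x₀) ^ k = (χ * ψ⁻¹) y := (map_pow (χ * ψ⁻¹) x₀ k).symm
    have h1 : (1 : ℝ) ≤ dist (χ y) (ψ y) := by
      have hdist : dist (χ y) (ψ y) = ‖(χ y : ℂ) - (ψ y : ℂ)‖ := by
        rw [show dist (χ y) (ψ y) = dist ((χ y : ℂ)) ((ψ y : ℂ)) from rfl, Complex.dist_eq]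
      have hc : (((χ * ψ⁻¹) y : Circle) : ℂ) = (χ y : ℂ) * ((ψ y : ℂ))⁻¹ := rfl
      have hfac : (χ y : ℂ) - (ψ y : ℂ) = (ψ y : ℂ) * ((((χ * ψ⁻¹) y : Circle) : ℂ) - 1) := by
        rw [hc]
        field_simp
      rw [hdist, hfac, norm_mul]
      rw [Circle.norm_coe, one_mul]
      rwa [hval] at hk
    calc (1 : ℝ) ≤ dist (χ y) (ψ y) := h1
      _ ≤ dist χ.toContinuousMap ψ.toContinuousMap :=
        ContinuousMap.dist_apply_le_dist (f := χ.toContinuousMap) (g := ψ.toContinuousMap) y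
  have hdisj : Pairwise (Disjoint on fun χ : PontryaginDual G =>
      Metric.ball (χ.toContinuousMap) (1/2)) := by
    intro χ ψ hne
    exact Metric.ball_disjoint_ball (by linarith [sep χ ψ hne])
  exact hdisj.countable_of_isOpen_disjoint (fun χ => Metric.isOpen_ball)
    (fun χ => ⟨χ.toContinuousMap, Metric.mem_ball_self (by norm_num)⟩)


/-- Let `G` be a compact abelian group and `A` a continuous surjective
endomorphism with finite kernel such that `⋃_j ker A^j` is dense in `G`. Then there is a
sequence `(K_j)` of subsets of the dual `Ĝ` with `K_0 = {1}` (trivial character, written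
multiplicatively), each `K_j` meeting every coset `η·Â^j(Ĝ)` in exactly one point,
`K_j ⊆ K_{j+1}`, `Â(K_j) ⊆ K_{j+1}`, and `⋃_j K_j = Ĝ`. -/
theorem exists_MSF_sets
    {G : Type*} [CommGroup G] [TopologicalSpace G] [IsTopologicalGroup G] [CompactSpace G]
    [SecondCountableTopology G]
    (A : ContinuousMonoidHom G G) (hAsurj : Function.Surjective A)
    (hker : {x : G | A x = 1}.Finite)
    (hdense : Dense (⋃ j : ℕ, {x : G | (⇑A)^[j] x = 1}))
    (adj : PontryaginDual G → PontryaginDual G)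
    (hadj : adj = fun χ => χ.comp A) :
    ∃ K : ℕ → Set (PontryaginDual G),
      K 0 = {1} ∧
      (∀ j : ℕ, ∀ η : PontryaginDual G,
        ∃! χ, χ ∈ K j ∧ ∃ ξ : PontryaginDual G, χ = η * adj^[j] ξ) ∧
      (∀ j : ℕ, K j ⊆ K (j + 1)) ∧
      (∀ j : ℕ, adj '' K j ⊆ K (j + 1)) ∧
      (⋃ j : ℕ, K j) = Set.univ := by
  classical
  let F : Monoid.End (PontryaginDual G) :=
    MonoidHom.mk' (fun χ => χ.comp A) (fun χ ψ => ContinuousMonoidHom.ext fun x => rfl)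
  have hadjF : adj = ⇑F := by rw [hadj]; rfl
  have hF : Function.Injective ⇑F := by
    intro χ ψ h
    apply ContinuousMonoidHom.ext
    intro x
    obtain ⟨y, rfl⟩ := hAsurj x
    exact DFunLike.congr_fun h y
  have pointwise : ∀ (j : ℕ) (ξ : PontryaginDual G) (x : G),
      ((F ^ j) ξ) x = ξ ((⇑A)^[j] x) := by
    intro j
    induction j with
    | zero => intro ξ x; rw [pow_zero]; rfl
    | succ j IH =>
      intro ξ x
      rw [pow_succ]
      show ((F ^ j) (F ξ)) x = ξ ((⇑A)^[j + 1] x)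
      rw [IH (F ξ) x, Function.iterate_succ_apply']
      rfl
  have htriv : ∀ χ : PontryaginDual G, (∀ j, χ ∈ MSF.Hs F j) → χ = 1 := by
    intro χ hall
    have hsub : (⋃ j : ℕ, {x : G | (⇑A)^[j] x = 1}) ⊆ {x : G | χ x = 1} := by
      intro x hx
      obtain ⟨j, hxj⟩ := Set.mem_iUnion.mp hx
      obtain ⟨ξ, hξ⟩ := hall j
      have hχx : χ x = ξ ((⇑A)^[j] x) := by rw [← hξ]; exact pointwise j ξ x
      have hxj' : (⇑A)^[j] x = 1 := hxj
      show χ x = 1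
      rw [hχx, hxj', map_one]
    have hclosed : IsClosed {x : G | χ x = 1} :=
      isClosed_eq (map_continuous χ) continuous_const
    have huniv : Set.univ ⊆ {x : G | χ x = 1} := by
      rw [← hdense.closure_eq]
      exact hclosed.closure_subset_iff.mpr hsub
    exact ContinuousMonoidHom.ext fun x => huniv (Set.mem_univ x)
  have : Countable (PontryaginDual G) := dual_countable G
  obtain ⟨e, he⟩ := exists_surjective_nat (PontryaginDual G)
  refine ⟨fun j => Set.range (MSF.rep F e he j), ?_, ?_, ?_, ?_, ?_⟩
  · ext χ
    simp only [Set.mem_range, Set.mem_singleton_iff]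
    constructor
    · rintro ⟨α, rfl⟩; rfl
    · rintro rfl; exact ⟨1, rfl⟩
  · intro j η
    have hiter : ∀ ξ : PontryaginDual G, adj^[j] ξ = (F ^ j) ξ := by
      intro ξ; rw [hadjF, ← Monoid.End.coe_pow]
    have hcond : ∀ χ : PontryaginDual G,
        (∃ ξ, χ = η * adj^[j] ξ) ↔ χ⁻¹ * η ∈ MSF.Hs F j := by
      intro χ
      constructor
      · rintro ⟨ξ, rfl⟩
        refine ⟨ξ⁻¹, ?_⟩
        show (F ^ j) ξ⁻¹ = _
        rw [map_inv, hiter]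
        group
      · rintro ⟨ξ, hξ⟩
        refine ⟨ξ⁻¹, ?_⟩
        rw [hiter, map_inv, show (F ^ j) ξ = χ⁻¹ * η from hξ]
        group
    refine ⟨MSF.rep F e he j η, ⟨⟨η, rfl⟩, (hcond _).mpr (MSF.rep_mem j η)⟩, ?_⟩
    rintro χ ⟨hχK, hχc⟩
    exact MSF.uniqK hF hχK ⟨η, rfl⟩
      (MSF.shiftH ((hcond χ).mp hχc) (MSF.symmH (MSF.rep_mem j η)))
  · intro j χ hχ
    obtain ⟨α, rfl⟩ := hχ
    exact ⟨MSF.rep F e he j α, MSF.rep_mono hF ⟨α, rfl⟩⟩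
  · intro j x hx
    obtain ⟨χ, ⟨α, rfl⟩, rfl⟩ := hx
    rw [hadjF]
    exact ⟨F (MSF.rep F e he j α), MSF.rep_adj hF ⟨α, rfl⟩⟩
  · apply Set.eq_univ_of_forall
    intro η
    rw [Set.mem_iUnion]
    obtain ⟨j, hj⟩ := MSF.cov hF htriv η
    exact ⟨j, η, hj⟩
end
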